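/- arXiv:2203.00799 — 11 statements merged into one kernel-verified Lean document; each statement's English description precedes it below -/
import Mathlib

section
/- For any finite simple graph G with minimum degree δ ≥ 1, the domination number satisfies γ(G) ≤ (1 - δ/(1+δ)^(1+1/δ)) · n, where n is the number of vertices. -/
open Finset

lemma helper_sum {V : Type*} [DecidableEq V] (p q : ℝ) (n : ℕ) (t : Finset V) (ht : t.card ≤ n) :
    ∑ S ∈ t.powerset, p ^ S.card * q ^ (n - S.card)
      = q ^ (n - t.card) * (p + q) ^ t.card := by
  have h1 : (p + q) ^ t.card = ∑ S ∈ t.powerset, p ^ S.card * q ^ (t.card - S.card) := by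
    have := Finset.prod_add (fun _ : V => p) (fun _ : V => q) t
    simp only [Finset.prod_const] at this
    rw [this]
    refine Finset.sum_congr rfl fun S hS => ?_
    rw [Finset.card_sdiff_of_subset (Finset.mem_powerset.mp hS)]
  rw [h1, Finset.mul_sum]
  refine Finset.sum_congr rfl fun S hS => ?_
  have hS' := Finset.card_le_card (Finset.mem_powerset.mp hS)
  rw [show n - S.card = (n - t.card) + (t.card - S.card) by omega, pow_add]
  ring

theorem domination_number_bound {V : Type*} [Fintype V] [Nonempty V]
    (G : SimpleGraph V) [DecidableRel G.Adj]
    (δ : ℕ) (hδ : δ = G.minDegree) (hδ1 : 1 ≤ δ) :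
    ∃ X : Finset V, (∀ v ∉ X, ∃ u ∈ X, G.Adj u v) ∧
      (X.card : ℝ) ≤ (1 - (δ : ℝ) / ((1 + (δ : ℝ)) ^ (1 + 1 / (δ : ℝ)))) * Fintype.card V := by
  classical
  set n := Fintype.card V with hn
  have hδR : (1 : ℝ) ≤ (δ : ℝ) := by exact_mod_cast hδ1
  have hδ0 : (0 : ℝ) < (δ : ℝ) := by linarith
  set a : ℝ := 1 + (δ : ℝ) with ha_def
  have ha1 : 1 < a := by simp only [ha_def]; linarith
  have ha0 : 0 < a := by linarith
  set q : ℝ := a ^ (-(1 / (δ : ℝ))) with hq_def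
  have hq0 : 0 < q := Real.rpow_pos_of_pos ha0 _
  have hq1 : q < 1 := by
    apply Real.rpow_lt_one_of_one_lt_of_neg ha1
    have : (0 : ℝ) < 1 / (δ : ℝ) := by positivity
    linarith
  set p : ℝ := 1 - q with hp_def
  have hp0 : 0 < p := by simp only [hp_def]; linarith
  have hpq : p + q = 1 := by simp [hp_def]
  -- the weight function
  set w : Finset V → ℝ := fun S => p ^ S.card * q ^ (n - S.card) with hw_def
  have hw0 : ∀ S : Finset V, 0 < w S := fun S => by positivity
  -- closed neighborhood
  set cl : V → Finset V := fun v => insert v (G.neighborFinset v) with hcl_def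
  have hclcard : ∀ v, δ + 1 ≤ (cl v).card := by
    intro v
    have h1 : (cl v).card = G.degree v + 1 := by
      simp only [hcl_def]
      rw [Finset.card_insert_of_notMem (by simp), SimpleGraph.card_neighborFinset_eq_degree]
    have h2 : δ ≤ G.degree v := hδ ▸ G.minDegree_le_degree v
    omega
  -- total weight is 1
  have h_total : ∑ S ∈ (univ : Finset V).powerset, w S = 1 := by
    have := helper_sum p q n (univ : Finset V) (le_of_eq Finset.card_univ)
    rw [Finset.card_univ, ← hn] at this
    simpa [hw_def, hpq] using this
  -- weight of sets disjoint from A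
  have h_disj : ∀ A : Finset V,
      ∑ S ∈ (univ : Finset V).powerset.filter (fun S => Disjoint A S), w S = q ^ A.card := by
    intro A
    have hfilter : (univ : Finset V).powerset.filter (fun S => Disjoint A S)
        = ((univ : Finset V) \ A).powerset := by
      ext S
      simp only [Finset.mem_filter, Finset.mem_powerset, Finset.subset_sdiff]
      constructor
      · rintro ⟨h1, h2⟩; exact ⟨h1, h2.symm⟩
      · rintro ⟨h1, h2⟩; exact ⟨h1, h2.symm⟩
    rw [hfilter]
    have hA : A.card ≤ n := by rw [hn]; exact Finset.card_le_univ A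
    have hcd : ((univ : Finset V) \ A).card = n - A.card := by
      rw [Finset.card_sdiff_of_subset (Finset.subset_univ A), Finset.card_univ]
    have := helper_sum p q n ((univ : Finset V) \ A) (by rw [hcd]; omega)
    rw [hcd, hpq, one_pow, mul_one, Nat.sub_sub_self hA] at this
    exact this
  -- probability that a fixed vertex belongs to S
  have h_mem : ∀ v : V,
      ∑ S ∈ (univ : Finset V).powerset.filter (fun S => v ∈ S), w S = p := by
    intro v
    have hsplit := Finset.sum_filter_add_sum_filter_not (univ : Finset V).powerset
      (fun S => v ∈ S) w
    rw [h_total] at hsplit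
    have hnot : (univ : Finset V).powerset.filter (fun S => v ∉ S)
        = (univ : Finset V).powerset.filter (fun S => Disjoint ({v} : Finset V) S) := by
      apply Finset.filter_congr
      intro S _
      simp [Finset.disjoint_singleton_left]
    have := h_disj ({v} : Finset V)
    rw [← hnot, Finset.card_singleton, pow_one] at this
    rw [this] at hsplit
    simp only [hp_def]
    linarith
  -- expected size of S
  have E1 : ∑ S ∈ (univ : Finset V).powerset, w S * (S.card : ℝ) = n * p := by
    have key : ∀ S ∈ (univ : Finset V).powerset,
        w S * (S.card : ℝ) = ∑ v ∈ (univ : Finset V), (if v ∈ S then w S else 0) := by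
      intro S hS
      rw [Finset.sum_ite_mem, Finset.univ_inter, Finset.sum_const, nsmul_eq_mul]
      ring
    rw [Finset.sum_congr rfl key, Finset.sum_comm]
    have inner : ∀ v : V,
        ∑ S ∈ (univ : Finset V).powerset, (if v ∈ S then w S else 0) = p := by
      intro v
      rw [← Finset.sum_filter]
      exact h_mem v
    rw [Finset.sum_congr rfl (fun v _ => inner v), Finset.sum_const, Finset.card_univ,
      nsmul_eq_mul]
  -- the set of undominated vertices
  set B : Finset V → Finset V :=
    fun S => (univ : Finset V).filter (fun v => Disjoint (cl v) S) with hB_def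
  have E2 : ∑ S ∈ (univ : Finset V).powerset, w S * ((B S).card : ℝ)
      ≤ n * q ^ (δ + 1) := by
    have key : ∀ S ∈ (univ : Finset V).powerset,
        w S * ((B S).card : ℝ)
          = ∑ v ∈ (univ : Finset V), (if Disjoint (cl v) S then w S else 0) := by
      intro S hS
      rw [Finset.sum_ite, Finset.sum_const, Finset.sum_const_zero, add_zero, nsmul_eq_mul]
      simp only [hB_def]
      ring
    rw [Finset.sum_congr rfl key, Finset.sum_comm]
    have inner : ∀ v : V,
        ∑ S ∈ (univ : Finset V).powerset, (if Disjoint (cl v) S then w S else 0)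
          ≤ q ^ (δ + 1) := by
      intro v
      rw [← Finset.sum_filter, h_disj (cl v)]
      exact pow_le_pow_of_le_one hq0.le hq1.le (hclcard v)
    calc ∑ v ∈ (univ : Finset V), ∑ S ∈ (univ : Finset V).powerset,
            (if Disjoint (cl v) S then w S else 0)
        ≤ ∑ _v ∈ (univ : Finset V), q ^ (δ + 1) :=
          Finset.sum_le_sum (fun v _ => inner v)
      _ = n * q ^ (δ + 1) := by rw [Finset.sum_const, Finset.card_univ, nsmul_eq_mul]
  -- the random dominating set
  set X : Finset V → Finset V := fun S => S ∪ B S with hX_def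
  have hXdom : ∀ S : Finset V, ∀ v ∉ X S, ∃ u ∈ X S, G.Adj u v := by
    intro S v hv
    simp only [hX_def, Finset.mem_union, not_or, hB_def, Finset.mem_filter,
      Finset.mem_univ, true_and] at hv
    obtain ⟨hvS, hvB⟩ := hv
    obtain ⟨u, hu1, hu2⟩ := Finset.not_disjoint_iff.mp hvB
    simp only [hcl_def, Finset.mem_insert, SimpleGraph.mem_neighborFinset] at hu1
    rcases hu1 with rfl | hadj
    · exact absurd hu2 hvS
    · exact ⟨u, Finset.mem_union_left _ hu2, hadj.symm⟩
  -- expected size of X S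
  have EX : ∑ S ∈ (univ : Finset V).powerset, w S * ((X S).card : ℝ)
      ≤ n * p + n * q ^ (δ + 1) := by
    calc ∑ S ∈ (univ : Finset V).powerset, w S * ((X S).card : ℝ)
        ≤ ∑ S ∈ (univ : Finset V).powerset, (w S * (S.card : ℝ) + w S * ((B S).card : ℝ)) := by
          refine Finset.sum_le_sum fun S _ => ?_
          rw [← mul_add]
          refine mul_le_mul_of_nonneg_left ?_ (hw0 S).le
          have := Finset.card_union_le S (B S)
          exact_mod_cast this
      _ = (∑ S ∈ (univ : Finset V).powerset, w S * (S.card : ℝ))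
            + ∑ S ∈ (univ : Finset V).powerset, w S * ((B S).card : ℝ) :=
          Finset.sum_add_distrib
      _ ≤ n * p + n * q ^ (δ + 1) := by rw [E1]; linarith [E2]
  -- the key arithmetic identity
  have hδne : (δ : ℝ) ≠ 0 := ne_of_gt hδ0
  have hq_pow : q ^ (δ + 1) = a ^ (-(1 + 1 / (δ : ℝ))) := by
    rw [hq_def, ← Real.rpow_natCast (a ^ (-(1 / (δ : ℝ)))) (δ + 1),
      ← Real.rpow_mul ha0.le]
    congr 1
    push_cast
    field_simp
  have hq_eq : q = a * a ^ (-(1 + 1 / (δ : ℝ))) := by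
    rw [hq_def]
    rw [show a * a ^ (-(1 + 1 / (δ : ℝ))) = a ^ (1 : ℝ) * a ^ (-(1 + 1 / (δ : ℝ))) by
      rw [Real.rpow_one], ← Real.rpow_add ha0]
    congr 1
    ring
  have hkey : n * p + n * q ^ (δ + 1)
      = (1 - (δ : ℝ) / (a ^ (1 + 1 / (δ : ℝ)))) * n := by
    have hrpos : (0 : ℝ) < a ^ (1 + 1 / (δ : ℝ)) := Real.rpow_pos_of_pos ha0 _
    have hneg : a ^ (-(1 + 1 / (δ : ℝ))) = (a ^ (1 + 1 / (δ : ℝ)))⁻¹ :=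
      Real.rpow_neg ha0.le _
    rw [hq_pow, hp_def, hq_eq, hneg, div_eq_mul_inv]
    have : a = (δ : ℝ) + 1 := by rw [ha_def]; ring
    rw [this]
    ring
  -- extract a good set
  have hex : ∃ S ∈ (univ : Finset V).powerset,
      ((X S).card : ℝ) ≤ (1 - (δ : ℝ) / (a ^ (1 + 1 / (δ : ℝ)))) * n := by
    by_contra hcon
    push_neg at hcon
    set T : ℝ := (1 - (δ : ℝ) / (a ^ (1 + 1 / (δ : ℝ)))) * n with hT
    have hlt : ∑ S ∈ (univ : Finset V).powerset, w S * T
        < ∑ S ∈ (univ : Finset V).powerset, w S * ((X S).card : ℝ) := by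
      refine Finset.sum_lt_sum_of_nonempty ⟨∅, Finset.empty_mem_powerset _⟩ fun S hS => ?_
      exact mul_lt_mul_of_pos_left (hcon S hS) (hw0 S)
    rw [← Finset.sum_mul, h_total, one_mul] at hlt
    rw [hkey] at EX
    linarith
  obtain ⟨S, _, hS2⟩ := hex
  exact ⟨X S, hXdom S, hS2⟩
end

section
/- For any finite simple graph G on n vertices with minimum degree δ, the domination number satisfies γ(G) ≤ n·(ln(δ+1)+1)/(δ+1). -/
set_option maxHeartbeats 1000000 in
private lemma log_ge_one_sub_inv {x : ℝ} (hx : 0 < x) : 1 - 1/x ≤ Real.log x := by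
  have h := Real.log_le_sub_one_of_pos (x := x⁻¹) (by positivity)
  rw [Real.log_inv] at h
  have : 1 - x⁻¹ ≤ Real.log x := by linarith
  simpa [one_div] using this

private lemma neg_log_ge {a : ℝ} (ha : 0 < a) (ha1 : a < 1) : a ≤ -Real.log (1 - a) := by
  have h := Real.log_le_sub_one_of_pos (x := 1 - a) (by linarith)
  linarith

private lemma aux2 {a x y : ℝ} (ha0 : 0 < a) (hx : 1 < x) (hy0 : 0 ≤ y)
    (hy1 : y ≤ 1) (hy2 : y ≤ (1 - a) * x) : a + y ≤ 1 + Real.log x := by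
  rcases le_or_gt ((1 - a) * x) 1 with h | h
  · -- use y ≤ (1-a) x and (1-a) ≤ 1/x
    have hxpos : (0:ℝ) < x := by linarith
    have h1 : (1 - a) ≤ 1 / x := by
      rw [le_div_iff₀ hxpos]; linarith
    have h2 : (1 - a) * (x - 1) ≤ (1 / x) * (x - 1) :=
      mul_le_mul_of_nonneg_right h1 (by linarith)
    have h3 : (1 / x) * (x - 1) = 1 - 1/x := by field_simp
    have h4 := log_ge_one_sub_inv hxpos
    nlinarith
  · -- x > 1/(1-a), use y ≤ 1 and a ≤ log x
    have ha1 : a < 1 := by nlinarith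
    have hxpos : (0:ℝ) < x := by linarith
    have h1a : (0:ℝ) < 1 - a := by linarith
    have hlog : Real.log (1 - a) + Real.log x = Real.log ((1-a)*x) :=
      (Real.log_mul (by linarith) (by linarith)).symm
    have h2 : 0 ≤ Real.log ((1-a)*x) - Real.log 1 := by
      have := Real.log_le_log (by norm_num) h.le
      simpa using this
    have h3 := neg_log_ge ha0 ha1
    simp [Real.log_one] at h2
    linarith

private lemma exists_good_vertex {V : Type*} [Fintype V] [Nonempty V] [DecidableEq V]
    (G : SimpleGraph V) [DecidableRel G.Adj] (U : Finset V) :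
    ∃ v : V, (G.minDegree + 1) * U.card ≤
      Fintype.card V * ((insert v (G.neighborFinset v)) ∩ U).card := by
  classical
  have hmem : ∀ u v : V, (u ∈ insert v (G.neighborFinset v)) ↔ (v ∈ insert u (G.neighborFinset u)) := by
    intro u v
    simp only [Finset.mem_insert, SimpleGraph.mem_neighborFinset]
    constructor
    · rintro (h | h)
      exacts [Or.inl h.symm, Or.inr h.symm]
    · rintro (h | h)
      exacts [Or.inl h.symm, Or.inr h.symm]
  have hsum : (G.minDegree + 1) * U.card ≤
      ∑ v : V, ((insert v (G.neighborFinset v)) ∩ U).card := by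
    have e1 : ∀ v : V, ((insert v (G.neighborFinset v)) ∩ U).card
        = ∑ u ∈ U, if u ∈ insert v (G.neighborFinset v) then 1 else 0 := by
      intro v
      rw [← Finset.card_filter]
      congr 1
      ext u
      simp [Finset.mem_inter, Finset.mem_filter, and_comm]
    calc (G.minDegree + 1) * U.card = ∑ u ∈ U, (G.minDegree + 1) := by
          rw [Finset.sum_const, smul_eq_mul, mul_comm]
      _ ≤ ∑ u ∈ U, (G.degree u + 1) := by
          apply Finset.sum_le_sum
          intro u _
          exact Nat.add_le_add_right (G.minDegree_le_degree u) 1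
      _ = ∑ u ∈ U, ∑ v : V, (if u ∈ insert v (G.neighborFinset v) then 1 else 0) := by
          apply Finset.sum_congr rfl
          intro u _
          have : ∑ v : V, (if u ∈ insert v (G.neighborFinset v) then 1 else 0)
              = (Finset.univ.filter (fun v => u ∈ insert v (G.neighborFinset v))).card := by
            rw [Finset.card_filter]
          rw [this]
          have hset : Finset.univ.filter (fun v => u ∈ insert v (G.neighborFinset v))
              = insert u (G.neighborFinset u) := by
            ext v
            simp only [Finset.mem_filter, Finset.mem_univ, true_and]
            rw [hmem u v]
          rw [hset, Finset.card_insert_of_notMem (G.notMem_neighborFinset_self u),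
            G.card_neighborFinset_eq_degree]
      _ = ∑ v : V, ∑ u ∈ U, (if u ∈ insert v (G.neighborFinset v) then 1 else 0) :=
          Finset.sum_comm
      _ = ∑ v : V, ((insert v (G.neighborFinset v)) ∩ U).card := by
          apply Finset.sum_congr rfl
          intro v _
          rw [e1 v]
  by_contra hcon
  push_neg at hcon
  have hlt : ∑ v : V, Fintype.card V * ((insert v (G.neighborFinset v)) ∩ U).card
      < ∑ _v : V, (G.minDegree + 1) * U.card :=
    Finset.sum_lt_sum_of_nonempty Finset.univ_nonempty (fun v _ => hcon v)
  rw [← Finset.mul_sum, Finset.sum_const, smul_eq_mul] at hlt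
  have : Fintype.card V * ((G.minDegree + 1) * U.card)
      ≤ Fintype.card V * ∑ v : V, ((insert v (G.neighborFinset v)) ∩ U).card :=
    Nat.mul_le_mul_left _ hsum
  simp only [Finset.card_univ] at hlt
  omega

theorem domination_number_log_bound {V : Type*} [Fintype V] [Nonempty V]
    (G : SimpleGraph V) [DecidableRel G.Adj]
    (δ : ℕ) (hδ : δ = G.minDegree) :
    ∃ X : Finset V, (∀ v ∉ X, ∃ u ∈ X, G.Adj u v) ∧
      (X.card : ℝ) ≤ (Fintype.card V : ℝ) * (Real.log ((δ : ℝ) + 1) + 1) / ((δ : ℝ) + 1) := by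
  classical
  obtain ⟨n, hn_def⟩ : ∃ n : ℕ, n = Fintype.card V := ⟨_, rfl⟩
  have hn : 0 < n := hn_def ▸ Fintype.card_pos
  have hnR : (0:ℝ) < n := by exact_mod_cast hn
  obtain ⟨a, ha_def⟩ : ∃ a : ℝ, a = ((δ : ℝ) + 1) / n := ⟨_, rfl⟩
  have ha0 : 0 < a := by rw [ha_def]; positivity
  have key : ∀ k : ℕ, ∀ U : Finset V, U.card ≤ k →
      ∃ X : Finset V, (∀ u ∈ U, u ∈ X ∨ ∃ w ∈ X, G.Adj w u) ∧
        ((X.card : ℝ) ≤ if a * U.card ≤ 1 then (U.card : ℝ)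
          else (1 + Real.log (a * U.card)) / a) := by
    intro k
    induction k with
    | zero =>
      intro U hU
      have : U = ∅ := Finset.card_eq_zero.mp (Nat.le_zero.mp hU)
      subst this
      exact ⟨∅, by simp, by simp⟩
    | succ k ih =>
      intro U hU
      by_cases hsmall : a * U.card ≤ 1
      · exact ⟨U, fun u hu => Or.inl hu, by rw [if_pos hsmall]⟩
      · push_neg at hsmall
        obtain ⟨v, hv⟩ := exists_good_vertex G U
        rw [← hδ, ← hn_def] at hv
        set N := insert v (G.neighborFinset v) with hN_def
        set c : ℕ := (N ∩ U).card with hc_def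
        have hvR : ((δ:ℝ) + 1) * U.card ≤ (n:ℝ) * c := by exact_mod_cast hv
        have hac : a * U.card ≤ (c : ℝ) := by
          rw [ha_def, div_mul_eq_mul_div, div_le_iff₀ hnR]
          linarith [hvR]
        set U' := U \ N with hU'_def
        have hcard : c + U'.card = U.card := by
          rw [hc_def, hU'_def, Finset.inter_comm]
          exact Finset.card_inter_add_card_sdiff U N
        have hc1 : 1 ≤ c := by
          by_contra h
          push_neg at h
          have hc0 : c = 0 := by omega
          rw [hc0] at hac
          simp at hac
          linarith
        have hUcard_pos : 1 ≤ U.card := by omega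
        have hU'k : U'.card ≤ k := by omega
        obtain ⟨X', hX'dom, hX'card⟩ := ih U' hU'k
        refine ⟨insert v X', ?_, ?_⟩
        · intro u hu
          by_cases huN : u ∈ N
          · rcases Finset.mem_insert.mp huN with h | h
            · subst h; exact Or.inl (Finset.mem_insert_self _ _)
            · exact Or.inr ⟨v, Finset.mem_insert_self _ _,
                (SimpleGraph.mem_neighborFinset G v u).mp h⟩
          · have hu' : u ∈ U' := Finset.mem_sdiff.mpr ⟨hu, huN⟩
            rcases hX'dom u hu' with h | ⟨w, hw, hadj⟩
            · exact Or.inl (Finset.mem_insert_of_mem h)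
            · exact Or.inr ⟨w, Finset.mem_insert_of_mem hw, hadj⟩
        · rw [if_neg (not_le.mpr hsmall)]
          have hcardR : (U'.card : ℝ) = (U.card : ℝ) - c := by
            have : (c:ℝ) + U'.card = U.card := by exact_mod_cast hcard
            linarith
          have hm' : (U'.card : ℝ) ≤ (1 - a) * U.card := by
            rw [hcardR]; nlinarith
          have hXcard : ((insert v X').card : ℝ) ≤ (X'.card : ℝ) + 1 := by
            have := Finset.card_insert_le v X'
            exact_mod_cast this
          by_cases hsmall' : a * U'.card ≤ 1
          · rw [if_pos hsmall'] at hX'card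
            -- need: X'.card + 1 ≤ (1 + log (a * U.card)) / a
            have hy2 : a * U'.card ≤ (1 - a) * (a * U.card) := by
              calc a * (U'.card : ℝ) ≤ a * ((1 - a) * U.card) :=
                    mul_le_mul_of_nonneg_left hm' ha0.le
                _ = (1 - a) * (a * U.card) := by ring
            have h := aux2 (a := a) (x := a * U.card) (y := a * U'.card) ha0 hsmall
              (by positivity) hsmall' hy2
            have goal1 : (U'.card : ℝ) + 1 ≤ (1 + Real.log (a * U.card)) / a := by
              rw [le_div_iff₀ ha0]
              nlinarith [h]
            linarith
          · rw [if_neg hsmall'] at hX'card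
            push_neg at hsmall'
            have hU'pos : (0:ℝ) < (U'.card : ℝ) := by
              by_contra h
              push_neg at h
              have : a * U'.card ≤ 0 := by nlinarith
              linarith
            have hUR : (0:ℝ) < (U.card : ℝ) := by exact_mod_cast hUcard_pos
            have h1a : 0 < 1 - a := by
              by_contra hle
              push_neg at hle
              have h5 : (0:ℝ) < (1 - a) * U.card := lt_of_lt_of_le hU'pos hm'
              have h6 : (1 - a) * (U.card : ℝ) ≤ 0 :=
                mul_nonpos_of_nonpos_of_nonneg (by linarith) hUR.le
              linarith
            have hlogle : Real.log (a * U'.card) ≤ Real.log (1 - a) + Real.log (a * U.card) := by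
              rw [← Real.log_mul (by linarith) (by positivity)]
              apply Real.log_le_log (by positivity)
              calc a * (U'.card : ℝ) ≤ a * ((1 - a) * U.card) :=
                    mul_le_mul_of_nonneg_left hm' ha0.le
                _ = (1 - a) * (a * U.card) := by ring
            have hneg := neg_log_ge ha0 (by linarith)
            have hstep : (1 + Real.log (a * U'.card)) + a ≤ 1 + Real.log (a * U.card) := by
              linarith
            have goal1 : (1 + Real.log (a * U'.card)) / a + 1 ≤ (1 + Real.log (a * U.card)) / a := by
              have e : (1 + Real.log (a * U'.card)) / a + 1
                  = ((1 + Real.log (a * U'.card)) + a) / a := by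
                field_simp
              rw [e]
              gcongr
            linarith
  obtain ⟨X, hXdom, hXcard⟩ := key n Finset.univ (by simp [hn_def])
  rw [← hn_def]
  refine ⟨X, ?_, ?_⟩
  · intro v hv
    rcases hXdom v (Finset.mem_univ v) with h | h
    · exact absurd h hv
    · exact h
  · have hcardU : ((Finset.univ : Finset V).card : ℝ) = (n : ℝ) := by
      simp [hn_def]
    have han : a * ((Finset.univ : Finset V).card : ℝ) = (δ:ℝ) + 1 := by
      rw [hcardU, ha_def]
      field_simp
    rw [han] at hXcard
    by_cases hδ1 : (δ:ℝ) + 1 ≤ 1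
    · rw [if_pos hδ1] at hXcard
      have : (δ:ℝ) = 0 := by
        have : (0:ℝ) ≤ (δ:ℝ) := Nat.cast_nonneg δ
        linarith
      rw [hcardU] at hXcard
      rw [this]
      simpa using hXcard
    · rw [if_neg hδ1] at hXcard
      have hδpos : (0:ℝ) < (δ:ℝ) + 1 := by positivity
      have : (1 + Real.log ((δ:ℝ) + 1)) / a = (n : ℝ) * (Real.log ((δ:ℝ)+1) + 1) / ((δ:ℝ)+1) := by
        rw [ha_def]
        field_simp
        ring
      rw [this] at hXcard
      exact hXcard
end

section
/- For any vertex-weighted graph G with nonnegative vertex weights and minimum degree δ, γ_w(G) ≤ w_G · (ln(δ+1)+1)/(δ+1). -/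
open Finset

section Bern
variable {V : Type*} [Fintype V] [DecidableEq V]

noncomputable def bern (p : ℝ) (X : Finset V) : ℝ :=
  (∏ _v ∈ X, p) * ∏ _v ∈ (univ : Finset V) \ X, (1 - p)

lemma bern_pos {p : ℝ} (h0 : 0 < p) (h1 : p < 1) (X : Finset V) :
    0 < bern p X := by
  apply mul_pos <;> apply Finset.prod_pos <;> intros <;> linarith

lemma bern_total (p : ℝ) :
    ∑ X ∈ (univ : Finset V).powerset, bern p X = 1 := by
  unfold bern
  rw [← Finset.prod_add]
  simp

lemma bern_mem (p : ℝ) (u : V) :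
    ∑ X ∈ (univ : Finset V).powerset, (if u ∈ X then bern p X else 0) = p := by
  have key : ∀ X ∈ (univ : Finset V).powerset,
      (if u ∈ X then bern p X else 0)
        = (∏ _v ∈ X, p) * ∏ v ∈ (univ : Finset V) \ X, (if v = u then 0 else 1 - p) := by
    intro X _
    by_cases h : u ∈ X
    · simp only [h, if_true, bern]
      congr 1
      refine Finset.prod_congr rfl fun v hv => ?_
      rw [if_neg]
      rintro rfl
      exact (Finset.mem_sdiff.mp hv).2 h
    · rw [if_neg h]
      symm
      apply mul_eq_zero_of_right
      exact Finset.prod_eq_zero (Finset.mem_sdiff.mpr ⟨Finset.mem_univ u, h⟩) (by simp)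
  rw [Finset.sum_congr rfl key, ← Finset.prod_add]
  have : ∀ v : V, (p + if v = u then 0 else 1 - p) = if v = u then p else 1 := by
    intro v; by_cases h : v = u <;> simp [h]
  rw [Finset.prod_congr rfl fun v _ => this v, Finset.prod_ite_eq']
  simp

lemma bern_disj (p : ℝ) (S : Finset V) :
    ∑ X ∈ (univ : Finset V).powerset, (if X ∩ S = ∅ then bern p X else 0)
      = (1 - p) ^ S.card := by
  have key : ∀ X ∈ (univ : Finset V).powerset,
      (if X ∩ S = ∅ then bern p X else 0)
        = (∏ v ∈ X, (if v ∈ S then 0 else p)) * ∏ _v ∈ (univ : Finset V) \ X, (1 - p) := by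
    intro X _
    by_cases h : X ∩ S = ∅
    · rw [if_pos h]
      unfold bern
      congr 1
      refine Finset.prod_congr rfl fun v hv => ?_
      rw [if_neg]
      intro hvS
      exact (Finset.notMem_empty v) (h ▸ Finset.mem_inter.mpr ⟨hv, hvS⟩)
    · rw [if_neg h]
      obtain ⟨v, hv⟩ := Finset.nonempty_iff_ne_empty.mpr h
      rw [Finset.prod_eq_zero (i := v) (Finset.mem_inter.mp hv).1
        (by simp [(Finset.mem_inter.mp hv).2]), zero_mul]
  rw [Finset.sum_congr rfl key, ← Finset.prod_add]
  have : ∀ v : V, ((if v ∈ S then 0 else p) + (1 - p)) = if v ∈ S then (1 - p) else 1 := by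
    intro v; by_cases h : v ∈ S <;> simp [h]
  rw [Finset.prod_congr rfl fun v _ => this v, Finset.prod_ite_mem, Finset.univ_inter,
    Finset.prod_const]

end Bern

theorem weighted_domination_log_bound {V : Type*} [Fintype V] [Nonempty V]
    (G : SimpleGraph V) [DecidableRel G.Adj]
    (w : V → ℝ) (hw : ∀ v, 0 ≤ w v)
    (δ : ℕ) (hδ : δ = G.minDegree) :
    ∃ D : Finset V, (∀ v ∉ D, ∃ u ∈ D, G.Adj u v) ∧
      (∑ v ∈ D, w v) ≤ (∑ v, w v) * (Real.log ((δ : ℝ) + 1) + 1) / ((δ : ℝ) + 1) := by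
  classical
  set W : ℝ := ∑ v, w v with hW
  have hW0 : 0 ≤ W := Finset.sum_nonneg fun v _ => hw v
  by_cases h0 : δ = 0
  · refine ⟨Finset.univ, by simp, ?_⟩
    subst h0
    simp only [Nat.cast_zero, zero_add, Real.log_one, div_one, zero_add, mul_one]
    simp [hW]
  -- main case: δ ≥ 1
  have hd1 : (1 : ℝ) ≤ (δ : ℝ) := by exact_mod_cast Nat.one_le_iff_ne_zero.mpr h0
  set p : ℝ := Real.log ((δ : ℝ) + 1) / ((δ : ℝ) + 1) with hp
  have hδpos : (0 : ℝ) < (δ : ℝ) + 1 := by linarith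
  have hlogpos : 0 < Real.log ((δ : ℝ) + 1) := Real.log_pos (by linarith)
  have hp0 : 0 < p := div_pos hlogpos hδpos
  have hp1 : p < 1 := by
    rw [hp, div_lt_one hδpos]
    calc Real.log ((δ : ℝ) + 1) < (δ : ℝ) + 1 - 1 + 1 := by
          have := Real.add_one_le_exp (Real.log ((δ : ℝ) + 1))
          nlinarith [Real.exp_log hδpos, Real.add_one_le_exp (Real.log ((δ:ℝ)+1) - 1),
            Real.log_le_sub_one_of_pos hδpos]
      _ = (δ : ℝ) + 1 := by ring
  set Nc : V → Finset V := fun v => insert v (G.neighborFinset v) with hNc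
  have hNcCard : ∀ v, (Nc v).card = G.degree v + 1 := by
    intro v
    rw [hNc]
    rw [Finset.card_insert_of_notMem (by simp), SimpleGraph.card_neighborFinset_eq_degree]
  set B : ℝ := W * (Real.log ((δ : ℝ) + 1) + 1) / ((δ : ℝ) + 1) with hB
  set f : Finset V → ℝ :=
    fun X => (∑ u ∈ X, w u) + ∑ v, (if X ∩ Nc v = ∅ then w v else 0) with hf
  set P := (univ : Finset V).powerset with hP
  -- expectation computation
  have hE1 : ∑ X ∈ P, bern p X * (∑ u ∈ X, w u) = p * W := by
    have hrw : ∀ X : Finset V, (∑ u ∈ X, w u) = ∑ u, (if u ∈ X then w u else 0) := by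
      intro X
      rw [Finset.sum_ite_mem, Finset.univ_inter]
    simp_rw [hrw, Finset.mul_sum]
    rw [Finset.sum_comm]
    have h2 : ∀ u : V, ∑ X ∈ P, bern p X * (if u ∈ X then w u else 0) = p * w u := by
      intro u
      calc ∑ X ∈ P, bern p X * (if u ∈ X then w u else 0)
          = ∑ X ∈ P, (if u ∈ X then bern p X else 0) * w u := by
            refine Finset.sum_congr rfl fun X _ => ?_
            by_cases h : u ∈ X <;> simp [h, mul_comm]
        _ = (∑ X ∈ P, (if u ∈ X then bern p X else 0)) * w u := by rw [← Finset.sum_mul]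
        _ = p * w u := by rw [bern_mem]
    rw [Finset.sum_congr rfl fun u _ => h2 u, ← Finset.mul_sum]
  have hE2 : ∑ X ∈ P, bern p X * (∑ v, (if X ∩ Nc v = ∅ then w v else 0))
      = ∑ v, w v * (1 - p) ^ (Nc v).card := by
    simp_rw [Finset.mul_sum]
    rw [Finset.sum_comm]
    refine Finset.sum_congr rfl fun v _ => ?_
    calc ∑ X ∈ P, bern p X * (if X ∩ Nc v = ∅ then w v else 0)
        = ∑ X ∈ P, (if X ∩ Nc v = ∅ then bern p X else 0) * w v := by
          refine Finset.sum_congr rfl fun X _ => ?_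
          by_cases h : X ∩ Nc v = ∅ <;> simp [h, mul_comm]
      _ = (∑ X ∈ P, (if X ∩ Nc v = ∅ then bern p X else 0)) * w v := by rw [← Finset.sum_mul]
      _ = w v * (1 - p) ^ (Nc v).card := by rw [bern_disj, mul_comm]
  have hexp : ∑ X ∈ P, bern p X * f X ≤ B := by
    have hsplit : ∑ X ∈ P, bern p X * f X
        = p * W + ∑ v, w v * (1 - p) ^ (Nc v).card := by
      rw [hf]
      simp_rw [mul_add]
      rw [Finset.sum_add_distrib, hE1, hE2]
    rw [hsplit]
    have hpow : ∀ v : V, w v * (1 - p) ^ (Nc v).card ≤ w v * (1 - p) ^ (δ + 1) := by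
      intro v
      apply mul_le_mul_of_nonneg_left _ (hw v)
      apply pow_le_pow_of_le_one (by linarith) (by linarith)
      rw [hNcCard]
      have := G.minDegree_le_degree v
      omega
    have h1 : ∑ v, w v * (1 - p) ^ (Nc v).card ≤ W * (1 - p) ^ (δ + 1) := by
      calc ∑ v, w v * (1 - p) ^ (Nc v).card ≤ ∑ v, w v * (1 - p) ^ (δ + 1) :=
            Finset.sum_le_sum fun v _ => hpow v
        _ = W * (1 - p) ^ (δ + 1) := by rw [← Finset.sum_mul]
    have h2 : (1 - p) ^ (δ + 1) ≤ 1 / ((δ : ℝ) + 1) := by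
      have e1 : (1 - p) ≤ Real.exp (-p) := by
        have := Real.add_one_le_exp (-p); linarith
      have e2 : (1 - p) ^ (δ + 1) ≤ Real.exp (-p) ^ (δ + 1) :=
        pow_le_pow_left₀ (by linarith) e1 _
      have e3 : Real.exp (-p) ^ (δ + 1) = Real.exp (-(p * ((δ : ℝ) + 1))) := by
        rw [← Real.exp_nat_mul]
        congr 1
        push_cast
        ring
      have e4 : p * ((δ : ℝ) + 1) = Real.log ((δ : ℝ) + 1) := by
        rw [hp]
        field_simp
      rw [e3, e4, Real.exp_neg, Real.exp_log hδpos] at e2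
      rw [one_div]
      exact e2
    calc p * W + ∑ v, w v * (1 - p) ^ (Nc v).card
        ≤ p * W + W * (1 / ((δ : ℝ) + 1)) := by
          have := mul_le_mul_of_nonneg_left h2 hW0
          linarith
      _ = B := by
          rw [hB, hp]
          field_simp
  -- existence of a good X
  have hex : ∃ X ∈ P, f X ≤ B := by
    by_contra hcon
    push_neg at hcon
    have hlt : ∑ X ∈ P, bern p X * B < ∑ X ∈ P, bern p X * f X := by
      apply Finset.sum_lt_sum_of_nonempty ⟨∅, by simp [hP]⟩
      intro X hX
      exact mul_lt_mul_of_pos_left (hcon X hX) (bern_pos hp0 hp1 X)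
    rw [← Finset.sum_mul, bern_total, one_mul] at hlt
    linarith
  obtain ⟨X, _, hXB⟩ := hex
  set F := univ.filter (fun v => X ∩ Nc v = ∅) with hF
  refine ⟨X ∪ F, ?_, ?_⟩
  · intro v hv
    have hvX : v ∉ X := fun h => hv (Finset.mem_union_left _ h)
    have hvF : v ∉ F := fun h => hv (Finset.mem_union_right _ h)
    have hne : X ∩ Nc v ≠ ∅ := by
      intro h
      exact hvF (Finset.mem_filter.mpr ⟨Finset.mem_univ v, h⟩)
    obtain ⟨u, hu⟩ := Finset.nonempty_iff_ne_empty.mpr hne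
    obtain ⟨huX, huN⟩ := Finset.mem_inter.mp hu
    refine ⟨u, Finset.mem_union_left _ huX, ?_⟩
    rw [hNc] at huN
    rcases Finset.mem_insert.mp huN with h | h
    · exact absurd (h ▸ huX) hvX
    · exact (G.mem_neighborFinset v u).mp h |>.symm
  · refine le_trans ?_ hXB
    have hFsum : ∑ v ∈ F, w v = ∑ v, (if X ∩ Nc v = ∅ then w v else 0) := by
      rw [hF, Finset.sum_filter]
    have hunion : ∑ v ∈ X ∪ F, w v + ∑ v ∈ X ∩ F, w v = ∑ v ∈ X, w v + ∑ v ∈ F, w v :=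
      Finset.sum_union_inter
    have hnonneg : 0 ≤ ∑ v ∈ X ∩ F, w v := Finset.sum_nonneg fun v _ => hw v
    show ∑ v ∈ X ∪ F, w v ≤ ∑ u ∈ X, w u + ∑ v, (if X ∩ Nc v = ∅ then w v else 0)
    rw [← hFsum]
    linarith
end

section
/- Let G be a vertex-weighted graph with positive weights, minimum degree δ ≥ 1, k = w_max/w_ave ≤ δ+1, and p = 1 - (k/(δ+1))^(1/δ) ≤ w_min/w_max. Then γ_w(G) ≤ n·p·w_max + Σ_{i=1}^n w_i (1-p)^(d_i+1) ≤ (1 - δ·k^(1/δ)/(δ+1)^(1+1/δ)) · k · w_G. -/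
open Finset

lemma wdnb_norm {V : Type*} [DecidableEq V] (p : ℝ) (s : Finset V) :
    ∑ t ∈ s.powerset, p ^ t.card * (1 - p) ^ (s \ t).card = 1 := by
  have h := Finset.prod_add (fun _ : V => p) (fun _ : V => (1 - p)) s
  simp only [Finset.prod_const] at h
  rw [← h]; simp

lemma wdnb_master {V : Type*} [DecidableEq V] (p : ℝ) (s A : Finset V) (hA : A ⊆ s) :
    ∑ t ∈ (s \ A).powerset, p ^ t.card * (1 - p) ^ (s \ t).card = (1 - p) ^ A.card := by
  have key : ∀ t ∈ (s \ A).powerset, p ^ t.card * (1 - p) ^ (s \ t).card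
      = (1 - p) ^ A.card * (p ^ t.card * (1 - p) ^ ((s \ A) \ t).card) := by
    intro t ht
    rw [Finset.mem_powerset] at ht
    have hst : s \ t = ((s \ A) \ t) ∪ A := by
      ext x
      simp only [Finset.mem_sdiff, Finset.mem_union]
      constructor
      · intro ⟨hxs, hxt⟩
        by_cases hxA : x ∈ A
        · exact Or.inr hxA
        · exact Or.inl ⟨⟨hxs, hxA⟩, hxt⟩
      · rintro (⟨⟨hxs, _⟩, hxt⟩ | hxA)
        · exact ⟨hxs, hxt⟩
        · exact ⟨hA hxA, fun hxt => (Finset.mem_sdiff.mp (ht hxt)).2 hxA⟩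
    have hdisj : Disjoint ((s \ A) \ t) A :=
      (Finset.sdiff_disjoint (t := s) (s := A)).mono_left (Finset.sdiff_subset)
    rw [hst, Finset.card_union_of_disjoint hdisj]
    ring
  rw [Finset.sum_congr rfl key, ← Finset.mul_sum, wdnb_norm p (s \ A), mul_one]

lemma wdnb_disj_marg {V : Type*} [Fintype V] [DecidableEq V] (p : ℝ) (A : Finset V) :
    ∑ S ∈ Finset.univ.powerset.filter (fun S => Disjoint S A),
      p ^ S.card * (1 - p) ^ ((Finset.univ \ S).card) = (1 - p) ^ A.card := by
  have h : Finset.univ.powerset.filter (fun S => Disjoint S A)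
      = ((Finset.univ : Finset V) \ A).powerset := by
    ext S
    simp [Finset.subset_sdiff]
  rw [h]
  exact wdnb_master p _ A (Finset.subset_univ A)

theorem weighted_domination_nonuniform_bound {V : Type*} [Fintype V] [Nonempty V]
    (G : SimpleGraph V) [DecidableRel G.Adj]
    (w : V → ℝ) (hw : ∀ v, 0 < w v)
    (δ : ℕ) (hδ : δ = G.minDegree) (hδ1 : 1 ≤ δ)
    (wmax wmin wG wave k p : ℝ)
    (hmax : wmax = Finset.univ.sup' Finset.univ_nonempty w)
    (hmin : wmin = Finset.univ.inf' Finset.univ_nonempty w)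
    (hG : wG = ∑ v, w v)
    (hav : wave = wG / Fintype.card V)
    (hk : k = wmax / wave) (hk2 : k ≤ (δ : ℝ) + 1)
    (hp : p = 1 - (k / ((δ : ℝ) + 1)) ^ (1 / (δ : ℝ)))
    (hp2 : p ≤ wmin / wmax) :
    (∃ D : Finset V, (∀ v ∉ D, ∃ u ∈ D, G.Adj u v) ∧
        (∑ v ∈ D, w v) ≤ (Fintype.card V : ℝ) * p * wmax +
          ∑ v, w v * (1 - p) ^ ((G.degree v : ℝ) + 1)) ∧
      (Fintype.card V : ℝ) * p * wmax + (∑ v, w v * (1 - p) ^ ((G.degree v : ℝ) + 1)) ≤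
        (1 - (δ : ℝ) * k ^ (1 / (δ : ℝ)) / (((δ : ℝ) + 1) ^ (1 + 1 / (δ : ℝ)))) * k * wG := by
  classical
  -- basic positivity
  have hn : 0 < (Fintype.card V : ℝ) := by
    exact_mod_cast Fintype.card_pos
  have hwmax : 0 < wmax := by
    obtain ⟨v⟩ := ‹Nonempty V›
    exact lt_of_lt_of_le (hw v) (hmax ▸ Finset.le_sup' w (Finset.mem_univ v))
  have hwG : 0 < wG := hG ▸ Finset.sum_pos (fun v _ => hw v) Finset.univ_nonempty
  have hwave : 0 < wave := hav ▸ div_pos hwG hn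
  have hk0 : 0 < k := hk ▸ div_pos hwmax hwave
  have hdR : (0:ℝ) < (δ : ℝ) := by exact_mod_cast hδ1
  have hd1 : (0:ℝ) < (δ : ℝ) + 1 := by linarith
  set d : ℝ := (δ : ℝ) with hdd
  set t : ℝ := k / (d + 1) with htt
  have ht0 : 0 < t := div_pos hk0 hd1
  have ht1 : t ≤ 1 := (div_le_one hd1).mpr hk2
  have hs0 : 0 < (1 - p) := by
    rw [hp]; simpa using Real.rpow_pos_of_pos ht0 (1 / d)
  have hs1 : 1 - p ≤ 1 := by
    rw [hp]; simpa using Real.rpow_le_one ht0.le ht1 (by positivity)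
  have hp0 : 0 ≤ p := by linarith
  have hp1 : p ≤ 1 := by linarith
  have hwle : ∀ v : V, w v ≤ wmax := fun v => hmax ▸ Finset.le_sup' w (Finset.mem_univ v)
  have hnwmax : (Fintype.card V : ℝ) * wmax = k * wG := by
    rw [hk, hav]; field_simp
  -- the probability setup
  set μ : Finset V → ℝ := fun S => p ^ S.card * (1 - p) ^ ((Finset.univ \ S).card) with hμ
  have hμ0 : ∀ S : Finset V, 0 ≤ μ S := fun S => by
    apply mul_nonneg (pow_nonneg hp0 _) (pow_nonneg (by linarith) _)
  set P : Finset (Finset V) := (Finset.univ : Finset V).powerset with hP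
  have hnorm : ∑ S ∈ P, μ S = 1 := wdnb_norm p Finset.univ
  set N : V → Finset V := fun v => insert v (G.neighborFinset v) with hN
  have hNcard : ∀ v, (N v).card = G.degree v + 1 := by
    intro v
    rw [hN]
    simp [Finset.card_insert_of_notMem, SimpleGraph.notMem_neighborFinset_self]
  set bad : Finset V → Finset V := fun S => Finset.univ.filter (fun v => Disjoint S (N v)) with hbad
  set g : Finset V → ℝ := fun S => (∑ v ∈ S, w v) + ∑ v ∈ bad S, w v with hg
  -- marginals
  have hmem : ∀ v : V, ∑ S ∈ P.filter (fun S => v ∈ S), μ S = p := by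
    intro v
    have h2 := Finset.sum_filter_add_sum_filter_not P (fun S => v ∈ S) μ
    have h3 : P.filter (fun S => ¬ v ∈ S) = P.filter (fun S => Disjoint S {v}) := by
      apply Finset.filter_congr; intro S _; simp [Finset.disjoint_singleton_right]
    have h4 := wdnb_disj_marg p ({v} : Finset V)
    rw [hnorm] at h2
    rw [h3] at h2
    have h5 : ∑ S ∈ P.filter (fun S => Disjoint S ({v} : Finset V)), μ S = (1 - p) ^ 1 := by
      rw [Finset.card_singleton] at h4; exact h4
    rw [h5] at h2
    linarith [h2]
  have hdis : ∀ v : V, ∑ S ∈ P.filter (fun S => Disjoint S (N v)), μ S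
      = (1 - p) ^ (G.degree v + 1) := by
    intro v
    have h4 := wdnb_disj_marg p (N v)
    rw [← hNcard v]
    exact h4
  -- expectation
  have hE : ∑ S ∈ P, μ S * g S
      = (∑ v, w v * p) + ∑ v, w v * (1 - p) ^ (G.degree v + 1) := by
    have t1 : ∑ S ∈ P, μ S * (∑ v ∈ S, w v) = ∑ v, w v * p := by
      have e1 : ∀ S ∈ P, μ S * (∑ v ∈ S, w v)
          = ∑ v, (if v ∈ S then μ S * w v else 0) := by
        intro S _
        rw [Finset.mul_sum, Finset.sum_ite_mem, Finset.univ_inter]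
      rw [Finset.sum_congr rfl e1, Finset.sum_comm]
      apply Finset.sum_congr rfl
      intro v _
      rw [← Finset.sum_filter, ← Finset.sum_mul, hmem v, mul_comm]
    have t2 : ∑ S ∈ P, μ S * (∑ v ∈ bad S, w v)
        = ∑ v, w v * (1 - p) ^ (G.degree v + 1) := by
      have e1 : ∀ S ∈ P, μ S * (∑ v ∈ bad S, w v)
          = ∑ v, (if Disjoint S (N v) then μ S * w v else 0) := by
        intro S _
        rw [hbad]
        rw [Finset.sum_filter, Finset.mul_sum]
        apply Finset.sum_congr rfl
        intro v _
        simp [mul_ite]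
      rw [Finset.sum_congr rfl e1, Finset.sum_comm]
      apply Finset.sum_congr rfl
      intro v _
      rw [← Finset.sum_filter, ← Finset.sum_mul, hdis v, mul_comm]
    calc ∑ S ∈ P, μ S * g S
        = ∑ S ∈ P, (μ S * (∑ v ∈ S, w v) + μ S * (∑ v ∈ bad S, w v)) := by
          apply Finset.sum_congr rfl
          intro S _
          rw [hg]; ring
      _ = (∑ S ∈ P, μ S * (∑ v ∈ S, w v)) + ∑ S ∈ P, μ S * (∑ v ∈ bad S, w v) :=
          Finset.sum_add_distrib
      _ = _ := by rw [t1, t2]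
  -- existence of good S
  obtain ⟨S₀, hS₀P, hS₀min⟩ := P.exists_min_image g ⟨∅, by simp [hP]⟩
  have hgood : g S₀ ≤ (∑ v, w v * p) + ∑ v, w v * (1 - p) ^ (G.degree v + 1) := by
    rw [← hE]
    calc g S₀ = ∑ S ∈ P, μ S * g S₀ := by rw [← Finset.sum_mul, hnorm, one_mul]
    _ ≤ ∑ S ∈ P, μ S * g S :=
        Finset.sum_le_sum (fun S hS => mul_le_mul_of_nonneg_left (hS₀min S hS) (hμ0 S))
  -- convert nat powers to real powers
  have hcast : ∀ v : V, ((1 : ℝ) - p) ^ (G.degree v + 1)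
      = (1 - p) ^ ((G.degree v : ℝ) + 1) := by
    intro v
    rw [show ((G.degree v : ℝ) + 1) = ((G.degree v + 1 : ℕ) : ℝ) by push_cast; ring,
      Real.rpow_natCast]
  have hsum1 : (∑ v, w v * p) ≤ (Fintype.card V : ℝ) * p * wmax := by
    calc ∑ v, w v * p ≤ ∑ _v : V, wmax * p :=
          Finset.sum_le_sum (fun v _ => mul_le_mul_of_nonneg_right (hwle v) hp0)
      _ = (Fintype.card V : ℝ) * p * wmax := by
          rw [Finset.sum_const, Finset.card_univ, nsmul_eq_mul]; ring
  have hfirst : (∑ v ∈ S₀ ∪ bad S₀, w v) ≤ (Fintype.card V : ℝ) * p * wmax +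
      ∑ v, w v * (1 - p) ^ ((G.degree v : ℝ) + 1) := by
    have hui := Finset.sum_union_inter (s₁ := S₀) (s₂ := bad S₀) (f := w)
    have hint : 0 ≤ ∑ v ∈ S₀ ∩ bad S₀, w v := Finset.sum_nonneg (fun v _ => (hw v).le)
    have h1 : (∑ v ∈ S₀ ∪ bad S₀, w v) ≤ g S₀ := by
      rw [hg]; dsimp only; linarith
    have h2 : (∑ v, w v * (1 - p) ^ (G.degree v + 1))
        = ∑ v, w v * (1 - p) ^ ((G.degree v : ℝ) + 1) := by
      apply Finset.sum_congr rfl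
      intro v _
      rw [hcast v]
    linarith [hgood, hsum1, h2 ▸ hgood]
  refine ⟨⟨S₀ ∪ bad S₀, ?_, hfirst⟩, ?_⟩
  · -- domination
    intro v hv
    have hv1 : v ∉ S₀ := fun h => hv (Finset.mem_union_left _ h)
    have hv2 : v ∉ bad S₀ := fun h => hv (Finset.mem_union_right _ h)
    have hnd : ¬ Disjoint S₀ (N v) := by
      intro hcon
      exact hv2 (by rw [hbad]; simp [hcon])
    obtain ⟨u, huS, huN⟩ := Finset.not_disjoint_iff.mp hnd
    have hune : u ≠ v := fun h => hv1 (h ▸ huS)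
    have hadj : u ∈ G.neighborFinset v := by
      rw [hN] at huN
      rcases Finset.mem_insert.mp huN with h | h
      · exact absurd h hune
      · exact h
    exact ⟨u, Finset.mem_union_left _ huS,
      ((SimpleGraph.mem_neighborFinset G v u).mp hadj).symm⟩
  · -- second inequality
    have hdeg : ∀ v : V, d ≤ (G.degree v : ℝ) := by
      intro v
      rw [hdd]
      exact_mod_cast hδ ▸ G.minDegree_le_degree v
    have hbound : ∀ v : V, (1 - p) ^ ((G.degree v : ℝ) + 1) ≤ (1 - p) ^ (d + 1) := by
      intro v
      exact Real.rpow_le_rpow_of_exponent_ge hs0 hs1 (by linarith [hdeg v])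
    have hstep : (∑ v, w v * (1 - p) ^ ((G.degree v : ℝ) + 1)) ≤ wG * (1 - p) ^ (d + 1) := by
      calc ∑ v, w v * (1 - p) ^ ((G.degree v : ℝ) + 1)
          ≤ ∑ v, w v * (1 - p) ^ (d + 1) :=
            Finset.sum_le_sum (fun v _ =>
              mul_le_mul_of_nonneg_left (hbound v) (hw v).le)
        _ = wG * (1 - p) ^ (d + 1) := by rw [← Finset.sum_mul, ← hG]
    set q : ℝ := t ^ (1 + 1 / d) with hq
    have hsp : 1 - p = t ^ (1 / d) := by rw [hp]; ring
    have e1 : (1 - p) ^ (d + 1) = q := by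
      rw [hsp, ← Real.rpow_mul ht0.le, hq]
      congr 1
      field_simp
    have e2 : k * (t ^ (1 / d)) = (d + 1) * q := by
      have hkt : k = (d + 1) * t := by rw [htt]; field_simp
      rw [hq, Real.rpow_add ht0, Real.rpow_one, hkt]; ring
    have e3 : d * k ^ (1 / d) / ((d + 1) ^ (1 + 1 / d)) * k = d * q := by
      have h1 : k ^ ((1 : ℝ) + 1 / d) = k * k ^ (1 / d) := by
        rw [Real.rpow_add hk0, Real.rpow_one]
      have h2 : q = k ^ ((1 : ℝ) + 1 / d) / (d + 1) ^ ((1 : ℝ) + 1 / d) := by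
        rw [hq, htt, Real.div_rpow hk0.le hd1.le]
      have h3 : (0 : ℝ) < (d + 1) ^ ((1 : ℝ) + 1 / d) := Real.rpow_pos_of_pos hd1 _
      rw [h2, h1]
      field_simp
    have hL : p * (k * wG) + wG * (1 - p) ^ (d + 1) = (k - d * q) * wG := by
      rw [e1, hp]
      linear_combination (-wG) * e2
    have hR : (1 - d * k ^ (1 / d) / ((d + 1) ^ (1 + 1 / d))) * k * wG
        = (k - d * q) * wG := by
      linear_combination (-wG) * e3
    have hfin : (Fintype.card V : ℝ) * p * wmax = p * (k * wG) := by
      rw [mul_comm ((Fintype.card V : ℝ)) p, mul_assoc, hnwmax]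
    rw [hfin]
    calc p * (k * wG) + (∑ v, w v * (1 - p) ^ ((G.degree v : ℝ) + 1))
        ≤ p * (k * wG) + wG * (1 - p) ^ (d + 1) := by linarith [hstep]
      _ = (k - d * q) * wG := hL
      _ = (1 - d * k ^ (1 / d) / ((d + 1) ^ (1 + 1 / d))) * k * wG := hR.symm
end

section
/- Let G be a vertex-weighted graph with positive weights, minimum degree δ ≥ 1, z = w_max/w_min ≤ δ+1, and q = 1 - (z/(δ+1))^(1/δ). Then γ_w(G) ≤ q·z·w_G + Σ_{i=1}^n w_i (1-q)^(d_i+1) ≤ (1 - δ·z^(1/δ)/(δ+1)^(1+1/δ)) · z · w_G. -/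
open Finset

lemma aux_binom {V : Type*} [Fintype V] [DecidableEq V] (p : ℝ) (T : Finset V) :
    ∑ A ∈ T.powerset, p ^ A.card * (1-p) ^ Aᶜ.card = (1-p) ^ Tᶜ.card := by
  have h1 : ∀ A ∈ T.powerset, p ^ A.card * (1-p) ^ Aᶜ.card
      = (1-p) ^ Tᶜ.card * (p ^ A.card * (1-p) ^ (T \ A).card) := by
    intro A hA
    rw [Finset.mem_powerset] at hA
    have h2 : Aᶜ.card = Tᶜ.card + (T \ A).card := by
      rw [Finset.card_compl, Finset.card_compl, Finset.card_sdiff_of_subset hA]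
      have := Finset.card_le_card hA
      have := Finset.card_le_univ T
      omega
    rw [h2, pow_add]; ring
  rw [Finset.sum_congr rfl h1, ← Finset.mul_sum]
  have h3 : ∑ A ∈ T.powerset, p ^ A.card * (1-p) ^ (T \ A).card = 1 := by
    have := Finset.prod_add (fun _ : V => p) (fun _ => 1 - p) T
    simp [Finset.prod_const] at this
    rw [← this]
  rw [h3, mul_one]

lemma aux_total {V : Type*} [Fintype V] [DecidableEq V] (p : ℝ) :
    ∑ A : Finset V, p ^ A.card * (1-p) ^ Aᶜ.card = 1 := by
  simpa using aux_binom p (univ : Finset V)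

lemma aux_subset {V : Type*} [Fintype V] [DecidableEq V] (p : ℝ) (T : Finset V) :
    ∑ A ∈ (univ : Finset (Finset V)).filter (fun A => A ⊆ T),
      p ^ A.card * (1-p) ^ Aᶜ.card = (1-p) ^ Tᶜ.card := by
  rw [show (univ : Finset (Finset V)).filter (fun A => A ⊆ T) = T.powerset by
    ext A; simp]
  exact aux_binom p T

lemma aux_mem {V : Type*} [Fintype V] [DecidableEq V] (p : ℝ) (v : V) :
    ∑ A ∈ (univ : Finset (Finset V)).filter (fun A => v ∈ A),
      p ^ A.card * (1-p) ^ Aᶜ.card = p := by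
  have htot := aux_total (V := V) p
  have hsplit := Finset.sum_filter_add_sum_filter_not (univ : Finset (Finset V))
    (fun A => v ∈ A) (fun A => p ^ A.card * (1-p) ^ Aᶜ.card)
  have hnot : ∑ A ∈ (univ : Finset (Finset V)).filter (fun A => ¬ v ∈ A),
      p ^ A.card * (1-p) ^ Aᶜ.card = 1 - p := by
    rw [show (univ : Finset (Finset V)).filter (fun A => ¬ v ∈ A) = ({v}ᶜ : Finset V).powerset by
      ext A; simp [Finset.mem_powerset, Finset.subset_iff]]
    simpa using aux_binom p ({v}ᶜ : Finset V)
  rw [htot, hnot] at hsplit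
  linarith

lemma aux_swap {V : Type*} [Fintype V] [DecidableEq V] (μ : Finset V → ℝ) (w : V → ℝ)
    (P : Finset V → V → Prop) [∀ A v, Decidable (P A v)] :
    ∑ A : Finset V, μ A * ∑ v ∈ univ.filter (P A), w v
      = ∑ v, (∑ A ∈ (univ : Finset (Finset V)).filter (fun A => P A v), μ A) * w v := by
  simp_rw [Finset.sum_filter, Finset.mul_sum, mul_ite, mul_zero, Finset.sum_mul,
    ite_mul, zero_mul]
  exact Finset.sum_comm

theorem weighted_domination_inverse_bound {V : Type*} [Fintype V] [Nonempty V]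
    (G : SimpleGraph V) [DecidableRel G.Adj]
    (w : V → ℝ) (hw : ∀ v, 0 < w v)
    (δ : ℕ) (hδ : δ = G.minDegree) (hδ1 : 1 ≤ δ)
    (wmax wmin wG z q : ℝ)
    (hmax : wmax = Finset.univ.sup' Finset.univ_nonempty w)
    (hmin : wmin = Finset.univ.inf' Finset.univ_nonempty w)
    (hG : wG = ∑ v, w v)
    (hz : z = wmax / wmin) (hz2 : z ≤ (δ : ℝ) + 1)
    (hq : q = 1 - (z / ((δ : ℝ) + 1)) ^ (1 / (δ : ℝ))) :
    (∃ D : Finset V, (∀ v ∉ D, ∃ u ∈ D, G.Adj u v) ∧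
        (∑ v ∈ D, w v) ≤ q * z * wG + ∑ v, w v * (1 - q) ^ ((G.degree v : ℝ) + 1)) ∧
      q * z * wG + (∑ v, w v * (1 - q) ^ ((G.degree v : ℝ) + 1)) ≤
        (1 - (δ : ℝ) * z ^ (1 / (δ : ℝ)) / (((δ : ℝ) + 1) ^ (1 + 1 / (δ : ℝ)))) * z * wG := by
  classical
  have hδR : (1:ℝ) ≤ (δ : ℝ) := by exact_mod_cast hδ1
  have hδR0 : (δ : ℝ) ≠ 0 := by positivity
  have hδ1R : (0:ℝ) < (δ : ℝ) + 1 := by linarith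
  have hwmin : 0 < wmin := by
    rw [hmin]
    exact (Finset.lt_inf'_iff _).mpr (fun v _ => hw v)
  have hminmax : wmin ≤ wmax := by
    rw [hmin, hmax]
    obtain ⟨v⟩ := ‹Nonempty V›
    exact le_trans (Finset.inf'_le w (Finset.mem_univ v)) (Finset.le_sup' w (Finset.mem_univ v))
  have hz1 : 1 ≤ z := by rw [hz]; exact (one_le_div hwmin).mpr hminmax
  have hz0 : (0:ℝ) < z := by linarith
  set t := (z / ((δ : ℝ) + 1)) ^ (1 / (δ : ℝ)) with hts
  have ht0 : 0 < t := Real.rpow_pos_of_pos (by positivity) _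
  have ht1 : t ≤ 1 := Real.rpow_le_one (by positivity)
    ((div_le_one hδ1R).mpr hz2) (by positivity)
  have h1q : 1 - q = t := by rw [hq]; ring
  have hq0 : 0 ≤ q := by rw [hq]; linarith
  have hq1 : q < 1 := by rw [hq]; linarith
  have hwG : 0 < wG := by
    rw [hG]; exact Finset.sum_pos (fun v _ => hw v) Finset.univ_nonempty
  -- closed neighborhoods
  set Nc : V → Finset V := fun v => insert v (G.neighborFinset v) with hNc
  have hNcard : ∀ v, (Nc v).card = G.degree v + 1 := by
    intro v
    show (insert v (G.neighborFinset v)).card = G.degree v + 1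
    rw [Finset.card_insert_of_notMem (SimpleGraph.notMem_neighborFinset_self G v)]
    rfl
  -- the measure
  set μ : Finset V → ℝ := fun A => q ^ A.card * (1-q) ^ Aᶜ.card with hμ
  have h1q0 : (0:ℝ) < 1 - q := by rw [h1q]; exact ht0
  have hμ0 : ∀ A, 0 ≤ μ A := fun A =>
    mul_nonneg (pow_nonneg hq0 _) (pow_nonneg h1q0.le _)
  have htot : ∑ A : Finset V, μ A = 1 := aux_total q
  -- rpow to npow
  have hpow : ∀ v, w v * (1 - q) ^ ((G.degree v : ℝ) + 1)
      = w v * (1 - q) ^ (G.degree v + 1) := by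
    intro v
    rw [show ((G.degree v : ℝ) + 1) = ((G.degree v + 1 : ℕ) : ℝ) by push_cast; ring,
      Real.rpow_natCast]
  -- expectation identity
  set E : ℝ := q * wG + ∑ v, w v * (1-q) ^ (G.degree v + 1) with hEdef
  have hpartA : ∑ A : Finset V, μ A * ∑ v ∈ A, w v = q * wG := by
    have hc : ∀ A ∈ (univ : Finset (Finset V)), μ A * ∑ v ∈ A, w v
        = μ A * ∑ v ∈ univ.filter (fun v => v ∈ A), w v := by
      intro A _
      congr 1
      refine Finset.sum_congr ?_ (fun _ _ => rfl)
      ext v; simp only [Finset.mem_filter, Finset.mem_univ, true_and]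
    rw [Finset.sum_congr rfl hc, aux_swap μ w (fun A v => v ∈ A)]
    have h1 : ∀ v : V, (∑ A ∈ (univ : Finset (Finset V)).filter (fun A => v ∈ A), μ A) = q := by
      intro v
      simp only [hμ]
      exact aux_mem q v
    rw [Finset.sum_congr rfl (fun v _ => by rw [h1 v]), ← Finset.mul_sum, hG]
  have hpartB : ∑ A : Finset V, μ A * ∑ v ∈ univ.filter (fun v => A ⊆ (Nc v)ᶜ), w v
      = ∑ v, w v * (1-q) ^ (G.degree v + 1) := by
    rw [aux_swap μ w (fun A v => A ⊆ (Nc v)ᶜ)]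
    refine Finset.sum_congr rfl fun v _ => ?_
    have h2 : (∑ A ∈ (univ : Finset (Finset V)).filter (fun A => A ⊆ (Nc v)ᶜ), μ A)
        = (1-q) ^ (G.degree v + 1) := by
      simp only [hμ]
      rw [aux_subset q ((Nc v)ᶜ), compl_compl, hNcard]
    rw [h2, mul_comm]
  have hE : ∑ A : Finset V, μ A * ((∑ v ∈ A, w v)
      + ∑ v ∈ univ.filter (fun v => A ⊆ (Nc v)ᶜ), w v) = E := by
    simp_rw [mul_add]
    rw [Finset.sum_add_distrib, hpartA, hpartB, hEdef]
  -- existence of a good A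
  have hex : ∃ A : Finset V, (∑ v ∈ A, w v)
      + ∑ v ∈ univ.filter (fun v => A ⊆ (Nc v)ᶜ), w v ≤ E := by
    by_contra hcon
    push_neg at hcon
    have hlt : ∑ A : Finset V, μ A * E < ∑ A : Finset V, μ A * ((∑ v ∈ A, w v)
        + ∑ v ∈ univ.filter (fun v => A ⊆ (Nc v)ᶜ), w v) := by
      apply Finset.sum_lt_sum
      · exact fun A _ => mul_le_mul_of_nonneg_left (hcon A).le (hμ0 A)
      · refine ⟨∅, Finset.mem_univ _, ?_⟩
        have hμpos : 0 < μ (∅ : Finset V) := by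
          rw [hμ]
          simp only [Finset.card_empty, pow_zero, one_mul]
          have : 0 < 1 - q := by linarith
          positivity
        exact mul_lt_mul_of_pos_left (hcon ∅) hμpos
    rw [hE, ← Finset.sum_mul, htot, one_mul] at hlt
    exact lt_irrefl E hlt
  obtain ⟨A, hA⟩ := hex
  constructor
  · -- the dominating set
    refine ⟨A ∪ univ.filter (fun v => A ⊆ (Nc v)ᶜ), ?_, ?_⟩
    · intro v hv
      rw [Finset.mem_union] at hv
      push_neg at hv
      obtain ⟨hvA, hvf⟩ := hv
      rw [Finset.mem_filter] at hvf
      push_neg at hvf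
      have hns : ¬ A ⊆ (Nc v)ᶜ := hvf (Finset.mem_univ v)
      rw [Finset.not_subset] at hns
      obtain ⟨u, huA, hun⟩ := hns
      rw [Finset.mem_compl, not_not] at hun
      rw [hNc] at hun
      simp only [Finset.mem_insert, SimpleGraph.mem_neighborFinset] at hun
      rcases hun with rfl | hadj
      · exact absurd huA hvA
      · exact ⟨u, Finset.mem_union_left _ huA, hadj.symm⟩
    · -- weight bound
      have hle1 : ∑ v ∈ A ∪ univ.filter (fun v => A ⊆ (Nc v)ᶜ), w v
          ≤ (∑ v ∈ A, w v) + ∑ v ∈ univ.filter (fun v => A ⊆ (Nc v)ᶜ), w v := by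
        have hui := Finset.sum_union_inter (s₁ := A)
          (s₂ := univ.filter (fun v => A ⊆ (Nc v)ᶜ)) (f := w)
        have hnn : 0 ≤ ∑ v ∈ A ∩ univ.filter (fun v => A ⊆ (Nc v)ᶜ), w v :=
          Finset.sum_nonneg (fun v _ => (hw v).le)
        linarith
      have hqz : q * wG ≤ q * z * wG := by
        nlinarith [mul_nonneg (mul_nonneg hq0 hwG.le) (sub_nonneg.mpr hz1)]
      simp_rw [hpow]
      calc ∑ v ∈ A ∪ univ.filter (fun v => A ⊆ (Nc v)ᶜ), w v
          ≤ E := le_trans hle1 hA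
        _ ≤ q * z * wG + ∑ v, w v * (1-q) ^ (G.degree v + 1) := by
            rw [hEdef]; linarith
  · -- analytic bound
    have hdeg : ∀ v, (δ : ℝ) ≤ (G.degree v : ℝ) := by
      intro v
      exact_mod_cast hδ ▸ G.minDegree_le_degree v
    have hterm : ∀ v, w v * (1 - q) ^ ((G.degree v : ℝ) + 1)
        ≤ w v * (1 - q) ^ ((δ : ℝ) + 1) := by
      intro v
      apply mul_le_mul_of_nonneg_left _ (hw v).le
      rw [h1q]
      exact Real.rpow_le_rpow_of_exponent_ge ht0 ht1 (by linarith [hdeg v])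
    have hsum : ∑ v, w v * (1 - q) ^ ((G.degree v : ℝ) + 1)
        ≤ wG * (1 - q) ^ ((δ : ℝ) + 1) := by
      calc ∑ v, w v * (1 - q) ^ ((G.degree v : ℝ) + 1)
          ≤ ∑ v, w v * (1 - q) ^ ((δ : ℝ) + 1) := Finset.sum_le_sum (fun v _ => hterm v)
        _ = wG * (1 - q) ^ ((δ : ℝ) + 1) := by rw [← Finset.sum_mul, hG]
    -- key scalar identity
    have htd : t ^ (δ : ℝ) = z / ((δ : ℝ) + 1) := by
      rw [hts, ← Real.rpow_mul (by positivity), one_div_mul_cancel hδR0, Real.rpow_one]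
    have htsplit : t = z ^ (1 / (δ : ℝ)) / ((δ : ℝ) + 1) ^ (1 / (δ : ℝ)) := by
      rw [hts, Real.div_rpow hz0.le hδ1R.le]
    have hzsplit : z ^ (1 + 1 / (δ : ℝ)) = z * z ^ (1 / (δ : ℝ)) := by
      rw [Real.rpow_add hz0, Real.rpow_one]
    have hdsplit : ((δ : ℝ) + 1) ^ (1 + 1 / (δ : ℝ))
        = ((δ : ℝ) + 1) * ((δ : ℝ) + 1) ^ (1 / (δ : ℝ)) := by
      rw [Real.rpow_add hδ1R, Real.rpow_one]
    have hb0 : (0:ℝ) < ((δ : ℝ) + 1) ^ (1 / (δ : ℝ)) := Real.rpow_pos_of_pos hδ1R _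
    have httop : t ^ ((δ : ℝ) + 1) = t ^ (δ : ℝ) * t := by
      rw [Real.rpow_add ht0, Real.rpow_one]
    have key : q * z + t ^ ((δ : ℝ) + 1)
        = (1 - (δ : ℝ) * z ^ (1 / (δ : ℝ)) / (((δ : ℝ) + 1) ^ (1 + 1 / (δ : ℝ)))) * z := by
      rw [httop, htd, hdsplit, hq, htsplit]
      field_simp
      ring
    rw [h1q] at hsum ⊢
    calc q * z * wG + ∑ v, w v * t ^ ((G.degree v : ℝ) + 1)
        ≤ q * z * wG + wG * t ^ ((δ : ℝ) + 1) := by linarith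
      _ = (1 - (δ : ℝ) * z ^ (1 / (δ : ℝ)) / (((δ : ℝ) + 1) ^ (1 + 1 / (δ : ℝ)))) * z * wG := by
          linear_combination wG * key
end

section
/- For real numbers δ ≥ 1 and 1 ≤ z ≤ δ+1, the inequality (1 - 1/z)^δ ≤ z/(δ+1) holds; equivalently, 1 - (z/(δ+1))^(1/δ) ≤ 1/z. -/
theorem probability_in_unit_interval_ineq (δ z : ℝ) (hδ : 1 ≤ δ) (hz1 : 1 ≤ z)
    (hz2 : z ≤ δ + 1) :
    (1 - 1 / z) ^ δ ≤ z / (δ + 1) ∧ 1 - (z / (δ + 1)) ^ (1 / δ) ≤ 1 / z := by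
  have hz0 : 0 < z := lt_of_lt_of_le one_pos hz1
  have hδ0 : 0 < δ := lt_of_lt_of_le one_pos hδ
  have hb0 : 0 ≤ 1 - 1 / z := by
    have : 1 / z ≤ 1 := by rw [div_le_one hz0]; exact hz1
    linarith
  have h1 : (1 - 1 / z) ^ δ ≤ Real.exp (-(1/z)) ^ δ := by
    apply Real.rpow_le_rpow hb0 _ (le_of_lt hδ0)
    have := Real.add_one_le_exp (-(1/z))
    linarith
  have h2 : Real.exp (-(1/z)) ^ δ = Real.exp (-(δ/z)) := by
    rw [← Real.exp_mul]; ring_nf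
  have h3 : Real.exp (-(δ/z)) ≤ z / (z + δ) := by
    have he : δ/z + 1 ≤ Real.exp (δ/z) := Real.add_one_le_exp _
    have hd : 0 < δ/z := div_pos hδ0 hz0
    rw [Real.exp_neg]
    rw [inv_le_iff_one_le_mul₀ (Real.exp_pos _)]
    have hzd : 0 < z + δ := by linarith
    calc (1 : ℝ) = (z / (z + δ)) * ((z + δ)/z) := by field_simp
      _ ≤ (z / (z + δ)) * Real.exp (δ/z) := by
          apply mul_le_mul_of_nonneg_left _ (le_of_lt (div_pos hz0 hzd))
          calc (z + δ)/z = δ/z + 1 := by field_simp; ring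
            _ ≤ _ := he
  have h4 : z / (z + δ) ≤ z / (δ + 1) := by
    apply div_le_div_of_nonneg_left (le_of_lt hz0) (by linarith) (by linarith)
  have main : (1 - 1 / z) ^ δ ≤ z / (δ + 1) := by
    calc (1 - 1 / z) ^ δ ≤ Real.exp (-(1/z)) ^ δ := h1
      _ = Real.exp (-(δ/z)) := h2
      _ ≤ z / (z + δ) := h3
      _ ≤ z / (δ + 1) := h4
  refine ⟨main, ?_⟩
  have hroot : 1 - 1/z ≤ (z / (δ + 1)) ^ (1 / δ) := by
    have := Real.rpow_le_rpow (Real.rpow_nonneg hb0 δ) main (le_of_lt (one_div_pos.mpr hδ0))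
    rwa [← Real.rpow_mul hb0, mul_one_div, div_self (ne_of_gt hδ0), Real.rpow_one] at this
  linarith
end

section
/- For real δ ≥ 1 and real z ∈ [1, δ+1], the function f(z) = z^(1+1/δ)/(δ+1)^(1/δ) − z + 1 is nonnegative. -/
lemma key_aux (δ v : ℝ) (hδ : 1 ≤ δ) (hv0 : 0 ≤ v) (hv1 : v ≤ 1) :
    v ^ δ * (1 - v) ≤ 1 / (δ + 1) := by
  have hδ0 : (0:ℝ) < δ := by linarith
  have hδ1 : (0:ℝ) < δ + 1 := by linarith
  have h1v : 0 ≤ 1 - v := by linarith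
  have hw : δ / (δ + 1) + 1 / (δ + 1) = 1 := by field_simp
  have hgm := Real.geom_mean_le_arith_mean2_weighted
    (by positivity : (0:ℝ) ≤ δ / (δ + 1)) (by positivity : (0:ℝ) ≤ 1 / (δ + 1))
    hv0 (by positivity : (0:ℝ) ≤ δ * (1 - v)) hw
  have hrhs : δ / (δ + 1) * v + 1 / (δ + 1) * (δ * (1 - v)) = δ / (δ + 1) := by
    field_simp; ring
  rw [hrhs] at hgm
  have hbase : 0 ≤ v ^ (δ / (δ + 1)) * (δ * (1 - v)) ^ (1 / (δ + 1)) := by positivity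
  have hpow := Real.rpow_le_rpow hbase hgm (le_of_lt hδ1)
  rw [Real.mul_rpow (by positivity) (by positivity),
    ← Real.rpow_mul hv0, ← Real.rpow_mul (by positivity)] at hpow
  have e1 : δ / (δ + 1) * (δ + 1) = δ := by field_simp
  have e2 : 1 / (δ + 1) * (δ + 1) = 1 := by field_simp
  rw [e1, e2, Real.rpow_one] at hpow
  -- hpow : v ^ δ * (δ * (1 - v)) ≤ (δ / (δ + 1)) ^ (δ + 1)
  have hle1 : (δ / (δ + 1)) ^ (δ + 1) ≤ δ / (δ + 1) := by
    calc (δ / (δ + 1)) ^ (δ + 1) = (δ / (δ + 1)) ^ δ * (δ / (δ + 1)) ^ (1:ℝ) := by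
          rw [← Real.rpow_add (by positivity)]
      _ ≤ 1 * (δ / (δ + 1)) ^ (1:ℝ) := by
          gcongr
          exact Real.rpow_le_one (by positivity) (by
            rw [div_le_one hδ1]; linarith) (le_of_lt hδ0)
      _ = δ / (δ + 1) := by rw [one_mul, Real.rpow_one]
  have : v ^ δ * (δ * (1 - v)) ≤ δ / (δ + 1) := le_trans hpow hle1
  have hvp : 0 ≤ v ^ δ := Real.rpow_nonneg hv0 δ
  nlinarith [this]

theorem aux_function_nonneg (δ z : ℝ) (hδ : 1 ≤ δ) (hz1 : 1 ≤ z) (hz2 : z ≤ δ + 1) :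
    0 ≤ z ^ (1 + 1 / δ) / (δ + 1) ^ (1 / δ) - z + 1 := by
  have hδ0 : (0:ℝ) < δ := by linarith
  have hδ1 : (0:ℝ) < δ + 1 := by linarith
  have hz0 : (0:ℝ) < z := by linarith
  set v := (z / (δ + 1)) ^ (1 / δ) with hv
  have hu0 : 0 ≤ z / (δ + 1) := by positivity
  have hu1 : z / (δ + 1) ≤ 1 := by rw [div_le_one hδ1]; linarith
  have hv0 : 0 ≤ v := Real.rpow_nonneg hu0 _
  have hv1 : v ≤ 1 := Real.rpow_le_one hu0 hu1 (by positivity)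
  have hvd : v ^ δ = z / (δ + 1) := by
    rw [hv, ← Real.rpow_mul hu0, one_div, inv_mul_cancel₀ (ne_of_gt hδ0), Real.rpow_one]
  have hkey := key_aux δ v hδ hv0 hv1
  rw [hvd] at hkey
  have hzv : z * (1 - v) ≤ 1 := by
    have h := mul_le_mul_of_nonneg_left hkey (le_of_lt hδ1)
    calc z * (1 - v) = (δ + 1) * (z / (δ + 1) * (1 - v)) := by field_simp
      _ ≤ (δ + 1) * (1 / (δ + 1)) := h
      _ = 1 := by field_simp
  have hleft : z ^ (1 + 1 / δ) / (δ + 1) ^ (1 / δ) = z * v := by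
    rw [Real.rpow_add hz0, Real.rpow_one, hv, Real.div_rpow (le_of_lt hz0) (le_of_lt hδ1),
      mul_div_assoc]
  rw [hleft]
  nlinarith [hzv]
end

section
/- Let G be a graph and A a random subset of V(G) where each vertex is included independently with probability p ∈ [0,1]. Let B = V(G) \ N[A] and D = A ∪ B. Then the expected weight of D equals Σ_{i=1}^n w_i·(p + (1-p)^(d_i+1)), for any vertex weights w_i. -/
open Finset

theorem expected_weight_uniform {V : Type*} [Fintype V] [DecidableEq V]
    (G : SimpleGraph V) [DecidableRel G.Adj]
    (w : V → ℝ) (p : ℝ) (hp : p ∈ Set.Icc (0 : ℝ) 1) :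
    ∑ A ∈ (Finset.univ : Finset V).powerset,
        ((∏ _v ∈ A, p) * ∏ _v ∈ Finset.univ \ A, (1 - p)) *
          ∑ v ∈ Finset.univ.filter (fun v => v ∈ A ∨ ∀ a ∈ A, ¬ G.Adj a v), w v
      = ∑ v, w v * (p + (1 - p) ^ (G.degree v + 1)) := by
  classical
  set P : Finset V → ℝ := fun A => (∏ _v ∈ A, p) * ∏ _v ∈ Finset.univ \ A, (1 - p) with hP
  -- key lemma: sum of P over subsets of S
  have key : ∀ S : Finset V, ∑ A ∈ S.powerset, P A = (1 - p) ^ (Finset.univ \ S).card := by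
    intro S
    have h1 : ∀ A ∈ S.powerset,
        P A = ((∏ _v ∈ A, p) * ∏ _v ∈ S \ A, (1 - p)) * ∏ _v ∈ Finset.univ \ S, (1 - p) := by
      intro A hA
      rw [Finset.mem_powerset] at hA
      have hu : Finset.univ \ A = (S \ A) ∪ (Finset.univ \ S) := by
        ext x
        simp only [Finset.mem_sdiff, Finset.mem_union, Finset.mem_univ, true_and]
        constructor
        · intro hx
          by_cases hxS : x ∈ S
          · exact Or.inl ⟨hxS, hx⟩
          · exact Or.inr hxS
        · rintro (⟨_, hx⟩ | hx)
          · exact hx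
          · exact fun h => hx (hA h)
      have hd : Disjoint (S \ A) (Finset.univ \ S) := by
        rw [Finset.disjoint_left]
        intro x hx hx'
        exact (Finset.mem_sdiff.mp hx').2 (Finset.mem_sdiff.mp hx).1
      rw [hP]
      simp only
      rw [hu, Finset.prod_union hd, mul_assoc]
    rw [Finset.sum_congr rfl h1, ← Finset.sum_mul, ← Finset.prod_add]
    simp
  -- probability that v ∈ A
  have hmem : ∀ v : V, ∑ A ∈ (Finset.univ : Finset V).powerset,
      (if v ∈ A then P A else 0) = p := by
    intro v
    have hsplit : ∑ A ∈ (Finset.univ : Finset V).powerset, (if v ∈ A then P A else 0)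
        + ∑ A ∈ (Finset.univ : Finset V).powerset, (if v ∉ A then P A else 0)
        = ∑ A ∈ (Finset.univ : Finset V).powerset, P A := by
      rw [← Finset.sum_add_distrib]
      refine Finset.sum_congr rfl fun A _ => ?_
      by_cases h : v ∈ A <;> simp [h]
    have hnot : ∑ A ∈ (Finset.univ : Finset V).powerset, (if v ∉ A then P A else 0)
        = (1 - p) ^ 1 := by
      rw [← Finset.sum_filter]
      have : (Finset.univ : Finset V).powerset.filter (fun A => v ∉ A)
          = (Finset.univ.erase v).powerset := by
        ext A
        simp [Finset.subset_erase, Finset.subset_univ]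
      rw [this, key]
      congr 1
      rw [Finset.sdiff_erase (Finset.mem_univ v)]
      simp
    have htot : ∑ A ∈ (Finset.univ : Finset V).powerset, P A = 1 := by
      rw [key]; simp
    rw [hnot, htot] at hsplit
    linarith
  -- probability that A avoids the closed neighborhood of v
  have havoid : ∀ v : V, ∑ A ∈ (Finset.univ : Finset V).powerset,
      (if v ∉ A ∧ ∀ a ∈ A, ¬ G.Adj a v then P A else 0) = (1 - p) ^ (G.degree v + 1) := by
    intro v
    rw [← Finset.sum_filter]
    have hfil : (Finset.univ : Finset V).powerset.filter
        (fun A => v ∉ A ∧ ∀ a ∈ A, ¬ G.Adj a v)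
        = (Finset.univ \ insert v (G.neighborFinset v)).powerset := by
      ext A
      simp only [Finset.mem_filter, Finset.mem_powerset, Finset.subset_univ, true_and,
        Finset.subset_iff, Finset.mem_sdiff, Finset.mem_univ, Finset.mem_insert,
        SimpleGraph.mem_neighborFinset]
      constructor
      · rintro ⟨-, hv, hadj⟩ x hx
        rintro (rfl | h)
        · exact hv hx
        · exact hadj x hx (G.adj_symm h)
      · intro h
        exact ⟨fun x _ => trivial, fun hv => h hv (Or.inl rfl),
          fun a ha hadj => h ha (Or.inr (G.adj_symm hadj))⟩
    rw [hfil, key]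
    congr 1
    rw [Finset.sdiff_sdiff_self_left, Finset.univ_inter]
    rw [Finset.card_insert_of_notMem (by simp), G.card_neighborFinset_eq_degree]
  -- now the main computation
  calc ∑ A ∈ (Finset.univ : Finset V).powerset,
        P A * ∑ v ∈ Finset.univ.filter (fun v => v ∈ A ∨ ∀ a ∈ A, ¬ G.Adj a v), w v
      = ∑ A ∈ (Finset.univ : Finset V).powerset, ∑ v ∈ Finset.univ,
          (if v ∈ A ∨ ∀ a ∈ A, ¬ G.Adj a v then P A * w v else 0) := by
        refine Finset.sum_congr rfl fun A _ => ?_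
        rw [Finset.mul_sum, Finset.sum_filter]
    _ = ∑ v ∈ Finset.univ, ∑ A ∈ (Finset.univ : Finset V).powerset,
          (if v ∈ A ∨ ∀ a ∈ A, ¬ G.Adj a v then P A * w v else 0) := Finset.sum_comm
    _ = ∑ v, w v * (p + (1 - p) ^ (G.degree v + 1)) := by
        refine Finset.sum_congr rfl fun v _ => ?_
        have hsplit : ∀ A : Finset V,
            (if v ∈ A ∨ ∀ a ∈ A, ¬ G.Adj a v then P A * w v else 0)
            = (if v ∈ A then P A else 0) * w v
              + (if v ∉ A ∧ ∀ a ∈ A, ¬ G.Adj a v then P A else 0) * w v := by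
          intro A
          by_cases h1 : v ∈ A
          · simp [h1]
          · by_cases h2 : ∀ a ∈ A, ¬ G.Adj a v <;> simp [h1, h2]
        simp_rw [hsplit]
        rw [Finset.sum_add_distrib, ← Finset.sum_mul, ← Finset.sum_mul, hmem v, havoid v]
        ring
end

section
/- Let G be a graph with vertex weights, and let each vertex v_i be included in a random set A independently with probability p_i ∈ [0,1]. With B = V(G) \ N[A] and D = A ∪ B, the expected weight of D equals Σ_i w_i·p_i + Σ_i w_i·Π_{v_j ∈ N[v_i]} (1 − p_j). -/
lemma key_indicator_sum {V : Type*} [DecidableEq V] (s T U : Finset V)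
    (hT : T ⊆ s) (hU : U ⊆ s \ T) (f g : V → ℝ) :
    ∑ A ∈ s.powerset, ((∏ v ∈ A, f v) * ∏ v ∈ s \ A, g v) *
      (if T ⊆ A ∧ Disjoint A U then 1 else 0)
    = (∏ v ∈ T, f v) * (∏ v ∈ U, g v) * ∏ v ∈ (s \ T) \ U, (f v + g v) := by
  classical
  have hTU : Disjoint T U := by
    refine Finset.disjoint_left.mpr fun a ha hau => ?_
    exact (Finset.mem_sdiff.mp (hU hau)).2 ha
  set f' : V → ℝ := fun u => if u ∈ U then 0 else f u with hf'
  set g' : V → ℝ := fun u => if u ∈ T then 0 else g u with hg'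
  have h1 : ∑ A ∈ s.powerset, (∏ v ∈ A, f' v) * ∏ v ∈ s \ A, g' v
      = ∏ u ∈ s, (f' u + g' u) := (Finset.prod_add f' g' s).symm
  have hL : ∑ A ∈ s.powerset, ((∏ v ∈ A, f v) * ∏ v ∈ s \ A, g v) *
      (if T ⊆ A ∧ Disjoint A U then 1 else 0)
      = ∑ A ∈ s.powerset, (∏ v ∈ A, f' v) * ∏ v ∈ s \ A, g' v := by
    refine Finset.sum_congr rfl fun A hA => ?_
    by_cases hC : T ⊆ A ∧ Disjoint A U
    · rw [if_pos hC, mul_one]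
      have e1 : ∏ v ∈ A, f' v = ∏ v ∈ A, f v := by
        refine Finset.prod_congr rfl fun u hu => ?_
        simp only [hf', if_neg (Finset.disjoint_left.mp hC.2 hu)]
      have e2 : ∏ v ∈ s \ A, g' v = ∏ v ∈ s \ A, g v := by
        refine Finset.prod_congr rfl fun u hu => ?_
        have : u ∉ T := fun ht => (Finset.mem_sdiff.mp hu).2 (hC.1 ht)
        simp only [hg', if_neg this]
      rw [e1, e2]
    · rw [if_neg hC, mul_zero]
      rw [not_and_or] at hC
      rcases hC with hC | hC
      · obtain ⟨t, htT, htA⟩ := Finset.not_subset.mp hC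
        have hts : t ∈ s \ A := Finset.mem_sdiff.mpr ⟨hT htT, htA⟩
        have : g' t = 0 := by simp [hg', htT]
        rw [Finset.prod_eq_zero hts this, mul_zero]
      · rw [Finset.disjoint_left] at hC
        push_neg at hC
        obtain ⟨u, huA, huU⟩ := hC
        have : f' u = 0 := by simp [hf', huU]
        rw [Finset.prod_eq_zero huA this, zero_mul]
  have hR : ∏ u ∈ s, (f' u + g' u)
      = (∏ v ∈ T, f v) * (∏ v ∈ U, g v) * ∏ v ∈ (s \ T) \ U, (f v + g v) := by
    rw [← Finset.prod_sdiff hT, ← Finset.prod_sdiff hU]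
    have eT : ∏ u ∈ T, (f' u + g' u) = ∏ v ∈ T, f v := by
      refine Finset.prod_congr rfl fun u hu => ?_
      simp [hf', hg', Finset.disjoint_left.mp hTU hu, hu]
    have eU : ∏ u ∈ U, (f' u + g' u) = ∏ v ∈ U, g v := by
      refine Finset.prod_congr rfl fun u hu => ?_
      have huT : u ∉ T := Finset.disjoint_right.mp hTU hu
      simp [hf', hg', hu, huT]
    have eR : ∏ u ∈ (s \ T) \ U, (f' u + g' u) = ∏ v ∈ (s \ T) \ U, (f v + g v) := by
      refine Finset.prod_congr rfl fun u hu => ?_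
      obtain ⟨hu1, hu2⟩ := Finset.mem_sdiff.mp hu
      have huT : u ∉ T := (Finset.mem_sdiff.mp hu1).2
      simp [hf', hg', hu2, huT]
    rw [eT, eU, eR]; ring
  rw [hL, h1, hR]

theorem expected_weight_nonuniform {V : Type*} [Fintype V] [DecidableEq V]
    (G : SimpleGraph V) [DecidableRel G.Adj]
    (w : V → ℝ) (p : V → ℝ) (hp : ∀ v, p v ∈ Set.Icc (0 : ℝ) 1) :
    ∑ A ∈ (Finset.univ : Finset V).powerset,
        ((∏ v ∈ A, p v) * ∏ v ∈ Finset.univ \ A, (1 - p v)) *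
          ∑ v ∈ Finset.univ.filter (fun v => v ∈ A ∨ ∀ a ∈ A, ¬ G.Adj a v), w v
      = (∑ v, w v * p v) +
          ∑ v, w v * ∏ u ∈ insert v (G.neighborFinset v), (1 - p u) := by
  classical
  set f : V → ℝ := p
  set g : V → ℝ := fun v => 1 - p v with hg
  -- key per-vertex computations
  have hone : ∀ (S : Finset V), ∏ v ∈ S, (f v + g v) = 1 := by
    intro S; simp [hg, f]
  have hmain : ∀ v : V,
      ∑ A ∈ (Finset.univ : Finset V).powerset,
        ((∏ u ∈ A, p u) * ∏ u ∈ Finset.univ \ A, (1 - p u)) *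
          (if v ∈ A ∨ ∀ a ∈ A, ¬ G.Adj a v then 1 else 0)
      = p v + ∏ u ∈ insert v (G.neighborFinset v), (1 - p u) := by
    intro v
    have hvN : v ∉ G.neighborFinset v := by simp
    -- rewrite indicator via inclusion-exclusion
    have hind : ∀ A : Finset V,
        (if v ∈ A ∨ ∀ a ∈ A, ¬ G.Adj a v then (1:ℝ) else 0)
        = (if ({v} : Finset V) ⊆ A ∧ Disjoint A (∅ : Finset V) then (1:ℝ) else 0)
          + (if (∅ : Finset V) ⊆ A ∧ Disjoint A (G.neighborFinset v) then (1:ℝ) else 0)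
          - (if ({v} : Finset V) ⊆ A ∧ Disjoint A (G.neighborFinset v) then (1:ℝ) else 0) := by
      intro A
      have hXY : (∀ a ∈ A, ¬ G.Adj a v) ↔ Disjoint A (G.neighborFinset v) := by
        rw [Finset.disjoint_right]
        constructor
        · intro h a ha haA
          exact h a haA (G.adj_symm (G.mem_neighborFinset v a |>.mp ha))
        · intro h a haA hadj
          exact h ((G.mem_neighborFinset v a).mpr (G.adj_symm hadj)) haA
      have hdA : Disjoint A (∅ : Finset V) := Finset.disjoint_empty_right A
      simp only [hXY]
      by_cases hX : v ∈ A <;> by_cases hY : Disjoint A (G.neighborFinset v)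
      · rw [if_pos (Or.inl hX), if_pos ⟨Finset.singleton_subset_iff.mpr hX, hdA⟩,
          if_pos ⟨Finset.empty_subset A, hY⟩, if_pos ⟨Finset.singleton_subset_iff.mpr hX, hY⟩]
        ring
      · rw [if_pos (Or.inl hX), if_pos ⟨Finset.singleton_subset_iff.mpr hX, hdA⟩,
          if_neg (fun h => hY h.2), if_neg (fun h => hY h.2)]
        ring
      · rw [if_pos (Or.inr hY), if_neg (fun h => hX (Finset.singleton_subset_iff.mp h.1)),
          if_pos ⟨Finset.empty_subset A, hY⟩,
          if_neg (fun h => hX (Finset.singleton_subset_iff.mp h.1))]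
        ring
      · rw [if_neg (fun h => h.elim hX hY), if_neg (fun h => hX (Finset.singleton_subset_iff.mp h.1)),
          if_neg (fun h => hY h.2), if_neg (fun h => hY h.2)]
        ring
    calc ∑ A ∈ (Finset.univ : Finset V).powerset,
          ((∏ u ∈ A, p u) * ∏ u ∈ Finset.univ \ A, (1 - p u)) *
            (if v ∈ A ∨ ∀ a ∈ A, ¬ G.Adj a v then 1 else 0)
        = ∑ A ∈ (Finset.univ : Finset V).powerset,
            (((∏ u ∈ A, f u) * ∏ u ∈ Finset.univ \ A, g u) *
              (if ({v} : Finset V) ⊆ A ∧ Disjoint A (∅ : Finset V) then (1:ℝ) else 0)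
            + ((∏ u ∈ A, f u) * ∏ u ∈ Finset.univ \ A, g u) *
              (if (∅ : Finset V) ⊆ A ∧ Disjoint A (G.neighborFinset v) then (1:ℝ) else 0)
            - ((∏ u ∈ A, f u) * ∏ u ∈ Finset.univ \ A, g u) *
              (if ({v} : Finset V) ⊆ A ∧ Disjoint A (G.neighborFinset v) then (1:ℝ) else 0)) := by
          refine Finset.sum_congr rfl fun A _ => ?_
          rw [hind A]; ring
      _ = p v + ∏ u ∈ insert v (G.neighborFinset v), (1 - p u) := by
          rw [Finset.sum_sub_distrib, Finset.sum_add_distrib,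
            key_indicator_sum Finset.univ {v} ∅ (by simp) (by simp) f g,
            key_indicator_sum Finset.univ ∅ (G.neighborFinset v) (by simp)
              (by simp) f g,
            key_indicator_sum Finset.univ {v} (G.neighborFinset v) (by simp)
              (by
                intro a ha
                simp only [Finset.mem_sdiff, Finset.mem_univ, Finset.mem_singleton, true_and]
                exact fun h => hvN (h ▸ ha)) f g,
            hone, hone, hone, Finset.prod_insert hvN]
          simp only [Finset.prod_singleton, Finset.prod_empty, hg]
          ring
  -- now the main computation
  have step1 : ∀ A : Finset V,
      ((∏ u ∈ A, p u) * ∏ u ∈ Finset.univ \ A, (1 - p u)) *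
        ∑ v ∈ Finset.univ.filter (fun v => v ∈ A ∨ ∀ a ∈ A, ¬ G.Adj a v), w v
      = ∑ v : V, w v * (((∏ u ∈ A, p u) * ∏ u ∈ Finset.univ \ A, (1 - p u)) *
          (if v ∈ A ∨ ∀ a ∈ A, ¬ G.Adj a v then 1 else 0)) := by
    intro A
    rw [Finset.sum_filter, Finset.mul_sum]
    refine Finset.sum_congr rfl fun v _ => ?_
    split_ifs <;> ring
  calc ∑ A ∈ (Finset.univ : Finset V).powerset,
        ((∏ v ∈ A, p v) * ∏ v ∈ Finset.univ \ A, (1 - p v)) *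
          ∑ v ∈ Finset.univ.filter (fun v => v ∈ A ∨ ∀ a ∈ A, ¬ G.Adj a v), w v
      = ∑ v : V, w v * (∑ A ∈ (Finset.univ : Finset V).powerset,
          ((∏ u ∈ A, p u) * ∏ u ∈ Finset.univ \ A, (1 - p u)) *
            (if v ∈ A ∨ ∀ a ∈ A, ¬ G.Adj a v then 1 else 0)) := by
        rw [Finset.sum_congr rfl fun A _ => step1 A, Finset.sum_comm]
        exact Finset.sum_congr rfl fun v _ => (Finset.mul_sum _ _ _).symm
    _ = ∑ v : V, w v * (p v + ∏ u ∈ insert v (G.neighborFinset v), (1 - p u)) := by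
        exact Finset.sum_congr rfl fun v _ => by rw [hmain v]
    _ = (∑ v, w v * p v) +
          ∑ v, w v * ∏ u ∈ insert v (G.neighborFinset v), (1 - p u) := by
        rw [← Finset.sum_add_distrib]
        exact Finset.sum_congr rfl fun v _ => by ring
end

section
/- For any real δ ≥ 1, real k with 0 < k ≤ δ+1, real n > 0 and w_max, w_G > 0 with n·w_max = k·w_G, the function ξ(p) = n·w_max·p + w_G·(1−p)^(δ+1) on [0,1] is minimized at p* = 1 − (k/(δ+1))^(1/δ), with minimum value (1 − δ·k^(1/δ)/(δ+1)^(1+1/δ))·k·w_G. -/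
theorem xi_minimized (δ k n wmax wG : ℝ) (hδ : 1 ≤ δ) (hk : 0 < k) (hk2 : k ≤ δ + 1)
    (hn : 0 < n) (hwmax : 0 < wmax) (hwG : 0 < wG) (h : n * wmax = k * wG) :
    (1 - (k / (δ + 1)) ^ (1 / δ)) ∈ Set.Icc (0 : ℝ) 1 ∧
    (∀ p ∈ Set.Icc (0 : ℝ) 1,
      n * wmax * (1 - (k / (δ + 1)) ^ (1 / δ)) +
          wG * (1 - (1 - (k / (δ + 1)) ^ (1 / δ))) ^ (δ + 1) ≤
        n * wmax * p + wG * (1 - p) ^ (δ + 1)) ∧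
    n * wmax * (1 - (k / (δ + 1)) ^ (1 / δ)) +
        wG * (1 - (1 - (k / (δ + 1)) ^ (1 / δ))) ^ (δ + 1) =
      (1 - δ * k ^ (1 / δ) / (δ + 1) ^ (1 + 1 / δ)) * k * wG := by
  have hδ0 : 0 < δ := lt_of_lt_of_le one_pos hδ
  have hd1 : 0 < δ + 1 := by linarith
  have hq : 0 < k / (δ + 1) := div_pos hk hd1
  set a : ℝ := (k / (δ + 1)) ^ (1 / δ) with ha_def
  have ha0 : 0 < a := Real.rpow_pos_of_pos hq _
  have ha1 : a ≤ 1 := by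
    apply Real.rpow_le_one hq.le (div_le_one_of_le₀ hk2 hd1.le)
    positivity
  have haδ : a ^ δ = k / (δ + 1) := by
    rw [ha_def, ← Real.rpow_mul hq.le, one_div_mul_cancel (ne_of_gt hδ0), Real.rpow_one]
  have haδ1 : a ^ (δ + 1) = (k / (δ + 1)) * a := by
    rw [Real.rpow_add ha0, haδ, Real.rpow_one]
  have hsimp : 1 - (1 - a) = a := by ring
  refine ⟨⟨by linarith, by linarith⟩, ?_, ?_⟩
  · intro p hp
    obtain ⟨hp0, hp1⟩ := hp
    set q : ℝ := 1 - p with hq_def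
    have hq0 : 0 ≤ q := by simp [hq_def]; linarith
    -- Bernoulli tangent line inequality
    have hs : -1 ≤ q / a - 1 := by
      have : 0 ≤ q / a := div_nonneg hq0 ha0.le
      linarith
    have hp1' : (1:ℝ) ≤ δ + 1 := by linarith
    have hber := one_add_mul_self_le_rpow_one_add hs hp1'
    rw [add_sub_cancel] at hber
    have hqa : (q / a) ^ (δ + 1) = q ^ (δ + 1) / a ^ (δ + 1) :=
      Real.div_rpow hq0 ha0.le _
    rw [hqa] at hber
    have haδ1pos : 0 < a ^ (δ + 1) := Real.rpow_pos_of_pos ha0 _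
    have hber2 : (1 + (δ + 1) * (q / a - 1)) * a ^ (δ + 1) ≤ q ^ (δ + 1) := by
      rw [← le_div_iff₀ haδ1pos]
      exact hber
    have hlhs : (1 + (δ + 1) * (q / a - 1)) * a ^ (δ + 1)
        = a ^ (δ + 1) + k * (q - a) := by
      rw [haδ1]
      field_simp
    rw [hlhs] at hber2
    have hgoal : wG * (a ^ (δ + 1) + k * (q - a)) ≤ wG * q ^ (δ + 1) :=
      mul_le_mul_of_nonneg_left hber2 hwG.le
    rw [hq_def] at hgoal
    rw [hsimp, h]
    nlinarith [hgoal]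
  · rw [hsimp, h, haδ1]
    have hk1δ : a = k ^ (1 / δ) / (δ + 1) ^ (1 / δ) := by
      rw [ha_def, Real.div_rpow hk.le hd1.le]
    have hd1δ : (δ + 1) ^ (1 + 1 / δ) = (δ + 1) * (δ + 1) ^ (1 / δ) := by
      rw [Real.rpow_add hd1, Real.rpow_one]
    have hdp : 0 < (δ + 1) ^ (1 / δ) := Real.rpow_pos_of_pos hd1 _
    rw [hk1δ, hd1δ]
    field_simp
    ring
end

section
/- Let z ≥ 1, δ ≥ 1 be reals with z ≤ δ+1, and set q = 1 − (z/(δ+1))^(1/δ). For weights w_min ≤ w_i ≤ w_max with z = w_max/w_min and α = w_min + w_max, the values p_i = q·(z+1)·(1 − w_i/α) satisfy 0 ≤ p_i ≤ 1 for all i. -/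
lemma amgm_key {δ s : ℝ} (hδ : 1 ≤ δ) (hs0 : 0 ≤ s) (hs1 : s ≤ 1) :
    (δ + 1) * s ^ δ * (1 - s) ≤ 1 := by
  have hδ1 : (0:ℝ) < δ + 1 := by linarith
  have hne : δ + 1 ≠ 0 := ne_of_gt hδ1
  have hA := Real.geom_mean_le_arith_mean2_weighted
    (w₁ := δ / (δ + 1)) (w₂ := 1 / (δ + 1)) (p₁ := s) (p₂ := (δ + 1) * (1 - s))
    (by positivity) (by positivity) hs0 (by nlinarith) (by field_simp)
  have hRHS : δ / (δ + 1) * s + 1 / (δ + 1) * ((δ + 1) * (1 - s)) = 1 - s / (δ + 1) := by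
    field_simp; ring
  have hA1 : s ^ (δ / (δ + 1)) * ((δ + 1) * (1 - s)) ^ (1 / (δ + 1)) ≤ 1 := by
    rw [hRHS] at hA
    have : 0 ≤ s / (δ + 1) := by positivity
    linarith
  have hb : 0 ≤ (δ + 1) * (1 - s) := by nlinarith
  have hAnn : 0 ≤ s ^ (δ / (δ + 1)) * ((δ + 1) * (1 - s)) ^ (1 / (δ + 1)) :=
    mul_nonneg (Real.rpow_nonneg hs0 _) (Real.rpow_nonneg hb _)
  have hpow : (s ^ (δ / (δ + 1)) * ((δ + 1) * (1 - s)) ^ (1 / (δ + 1))) ^ (δ + 1) ≤ 1 :=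
    Real.rpow_le_one hAnn hA1 (le_of_lt hδ1)
  have heq : (s ^ (δ / (δ + 1)) * ((δ + 1) * (1 - s)) ^ (1 / (δ + 1))) ^ (δ + 1)
      = s ^ δ * ((δ + 1) * (1 - s)) := by
    rw [Real.mul_rpow (Real.rpow_nonneg hs0 _) (Real.rpow_nonneg hb _),
      ← Real.rpow_mul hs0, ← Real.rpow_mul hb,
      div_mul_cancel₀ _ hne, one_div, inv_mul_cancel₀ hne, Real.rpow_one]
  rw [heq] at hpow
  nlinarith [hpow]

theorem probabilities_valid_inverse (δ z q wmin wmax α : ℝ)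
    (hδ : 1 ≤ δ) (hz1 : 1 ≤ z) (hz2 : z ≤ δ + 1)
    (hq : q = 1 - (z / (δ + 1)) ^ (1 / δ))
    (hwmin : 0 < wmin) (hwmax : 0 < wmax)
    (hz : z = wmax / wmin) (hα : α = wmin + wmax) :
    ∀ wi : ℝ, wmin ≤ wi → wi ≤ wmax →
      0 ≤ q * (z + 1) * (1 - wi / α) ∧ q * (z + 1) * (1 - wi / α) ≤ 1 := by
  intro wi h1 h2
  have hδ1 : (0:ℝ) < δ + 1 := by linarith
  have hα0 : 0 < α := by rw [hα]; linarith
  have ht0 : 0 ≤ z / (δ + 1) := by positivity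
  have ht1 : z / (δ + 1) ≤ 1 := by rw [div_le_one hδ1]; linarith
  have hq0 : 0 ≤ q := by
    rw [hq]; have := Real.rpow_le_one ht0 ht1 (by positivity : (0:ℝ) ≤ 1/δ); linarith
  have hwi : 1 - wi / α ≥ 0 := by
    have : wi / α ≤ 1 := by rw [div_le_one hα0, hα]; linarith
    linarith
  constructor
  · have : 0 ≤ z + 1 := by linarith
    positivity
  · -- p ≤ q * z
    have hstep : q * (z + 1) * (1 - wi / α) ≤ q * (z + 1) * (1 - wmin / α) := by
      apply mul_le_mul_of_nonneg_left _ (by positivity)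
      have : wmin / α ≤ wi / α := by gcongr
      linarith
    have heq : q * (z + 1) * (1 - wmin / α) = q * z := by
      rw [hz, hα]; field_simp; ring
    -- key: q * z ≤ 1
    set s := (z / (δ + 1)) ^ (1 / δ) with hs
    have hδ0 : δ ≠ 0 := by linarith
    have hs0 : 0 ≤ s := Real.rpow_nonneg ht0 _
    have hs1 : s ≤ 1 := Real.rpow_le_one ht0 ht1 (by positivity)
    have hsδ : s ^ δ = z / (δ + 1) := by
      rw [hs, ← Real.rpow_mul ht0, one_div, inv_mul_cancel₀ hδ0, Real.rpow_one]
    have hkey := amgm_key hδ hs0 hs1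
    rw [hsδ] at hkey
    have hqz : q * z ≤ 1 := by
      rw [hq]
      have : (δ + 1) * (z / (δ + 1)) = z := by field_simp
      nlinarith [hkey, this]
    calc q * (z + 1) * (1 - wi / α) ≤ q * (z + 1) * (1 - wmin / α) := hstep
      _ = q * z := heq
      _ ≤ 1 := hqz
end
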